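/- arXiv:2304.05061 — 7 statements merged into one kernel-verified Lean document; each statement's English description precedes it below -/
import Mathlib

section
/- The formal power series exp(x) = Σ_{k≥0} x^k/k! in ℚ[[x]] is transcendental over the field of rational functions ℚ(x). -/
/-!
For distinct exponents `bᵢ`, the series `pᵢ(x) e^{bᵢ x}` with polynomial `pᵢ` are linearly
independent: applying `(D - bⱼ)^(deg pⱼ + 1)` kills the `j`-th term and replaces every other
`pᵢ` by `(D + bᵢ - bⱼ)^(deg pⱼ + 1) pᵢ`, which vanishes only if `pᵢ` does (`D + c` with
`c ≠ 0` multiplies the leading coefficient by `c`), so induction on the number of terms applies. An algebraic relation `∑ Pᵢ(x) exp(x)ⁱ = 0` is such a combination with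
`bᵢ = i`, since `exp(x)ⁱ = e^{i x}`.
-/

open PowerSeries Polynomial

namespace Polynomial

variable {R : Type*} [CommRing R]

noncomputable def derivativeAddSMul (c : R) : R[X] →ₗ[R] R[X] :=
  derivative + c • LinearMap.id

theorem derivativeAddSMul_apply (c : R) (q : R[X]) :
    derivativeAddSMul c q = derivative q + c • q := rfl

theorem derivativeAddSMul_zero : derivativeAddSMul (0 : R) = derivative := by
  simp [derivativeAddSMul]

theorem coeff_natDegree_derivativeAddSMul (c : R) (q : R[X]) :
    (derivativeAddSMul c q).coeff q.natDegree = c * q.leadingCoeff := by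
  rw [derivativeAddSMul_apply, coeff_add, coeff_derivative, coeff_natDegree_succ_eq_zero,
    coeff_smul, smul_eq_mul, zero_mul, zero_add, leadingCoeff]

theorem derivativeAddSMul_injective [NoZeroDivisors R] {c : R} (hc : c ≠ 0) :
    Function.Injective (derivativeAddSMul c) := by
  refine (injective_iff_map_eq_zero _).mpr fun q hq => ?_
  by_contra hq0
  have hlead := coeff_natDegree_derivativeAddSMul c q
  rw [hq, coeff_zero] at hlead
  exact mul_ne_zero hc (leadingCoeff_ne_zero.mpr hq0) hlead.symm

theorem pow_derivativeAddSMul_apply_eq_zero_iff [NoZeroDivisors R] {c : R} (hc : c ≠ 0)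
    (k : ℕ) {q : R[X]} : (derivativeAddSMul c ^ k) q = 0 ↔ q = 0 := by
  rw [Module.End.pow_apply]
  exact ((derivativeAddSMul_injective hc).iterate k).eq_iff' (iterate_map_zero _ k)

end Polynomial

namespace PowerSeries

theorem derivative_rescale {R : Type*} [CommSemiring R] (a : R) (f : R⟦X⟧) :
    d⁄dX R (rescale a f) = C a * rescale a (d⁄dX R f) := by
  ext n
  simp only [coeff_derivative, coeff_rescale, coeff_C_mul]
  ring

noncomputable def derivativeAddSMul {A : Type*} [CommRing A] (c : A) : A⟦X⟧ →ₗ[A] A⟦X⟧ :=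
  (d⁄dX A).toLinearMap + c • LinearMap.id

variable {A : Type*} [CommRing A] [Algebra ℚ A]

theorem derivative_rescale_exp (a : A) :
    d⁄dX A (rescale a (exp A)) = C a * rescale a (exp A) := by
  rw [derivative_rescale, derivative_exp]

theorem isUnit_rescale_exp (a : A) : IsUnit (rescale a (exp A)) :=
  (isUnit_exp A).map _

theorem coe_mul_rescale_exp_eq_zero_iff (q : A[X]) (b : A) :
    (q : A⟦X⟧) * rescale b (exp A) = 0 ↔ q = 0 := by
  rw [(isUnit_rescale_exp b).mul_left_eq_zero, coe_eq_zero_iff]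

theorem derivativeAddSMul_coe_mul_rescale_exp (c b : A) (q : A[X]) :
    derivativeAddSMul c ((q : A⟦X⟧) * rescale b (exp A)) =
      (Polynomial.derivativeAddSMul (b + c) q : A⟦X⟧) * rescale b (exp A) := by
  simp only [derivativeAddSMul, Polynomial.derivativeAddSMul_apply, LinearMap.add_apply,
    Derivation.coeFn_coe, Derivation.leibniz, derivative_rescale_exp, derivative_coe,
    LinearMap.smul_apply, LinearMap.id_apply]
  rw [Polynomial.smul_eq_C_mul, Polynomial.coe_add, Polynomial.coe_mul, Polynomial.coe_C,
    PowerSeries.smul_eq_C_mul, map_add]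
  ring

theorem pow_derivativeAddSMul_coe_mul_rescale_exp (c b : A) (q : A[X]) (k : ℕ) :
    (derivativeAddSMul c ^ k) ((q : A⟦X⟧) * rescale b (exp A)) =
      ((Polynomial.derivativeAddSMul (b + c) ^ k) q : A⟦X⟧) * rescale b (exp A) := by
  induction k with
  | zero => rfl
  | succ k ih =>
    rw [pow_succ', Module.End.mul_apply, ih, derivativeAddSMul_coe_mul_rescale_exp,
      pow_succ', Module.End.mul_apply]

theorem forall_eq_zero_of_sum_coe_mul_rescale_exp_eq_zero [IsDomain A] {ι : Type*}
    {b : ι → A} (hb : Function.Injective b) (s : Finset ι) (p : ι → A[X])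
    (h : ∑ i ∈ s, (p i : A⟦X⟧) * rescale (b i) (exp A) = 0) : ∀ i ∈ s, p i = 0 := by
  classical
  induction s using Finset.induction_on generalizing p with
  | empty => simp
  | insert j t hj ih =>
    set L := derivativeAddSMul (-b j) ^ ((p j).natDegree + 1)
    have hj_killed : L ((p j : A⟦X⟧) * rescale (b j) (exp A)) = 0 := by
      rw [pow_derivativeAddSMul_coe_mul_rescale_exp, add_neg_cancel,
        Polynomial.derivativeAddSMul_zero, Module.End.pow_apply,
        iterate_derivative_eq_zero (Nat.lt_succ_self _), Polynomial.coe_zero, zero_mul]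
    have hrest := congrArg L h
    rw [Finset.sum_insert hj, map_add, hj_killed, zero_add, map_sum, map_zero] at hrest
    simp only [L, pow_derivativeAddSMul_coe_mul_rescale_exp] at hrest
    have ht : ∀ i ∈ t, p i = 0 := fun i hi => by
      have hshift : b i + -b j ≠ 0 := by
        rw [← sub_eq_add_neg, sub_ne_zero]
        exact hb.ne (ne_of_mem_of_not_mem hi hj)
      exact (Polynomial.pow_derivativeAddSMul_apply_eq_zero_iff hshift _).mp (ih _ hrest i hi)
    have hpj : p j = 0 := by
      rwa [Finset.sum_insert hj,
        Finset.sum_eq_zero fun i hi => by rw [ht i hi, Polynomial.coe_zero, zero_mul],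
        add_zero, coe_mul_rescale_exp_eq_zero_iff] at h
    exact (Finset.forall_mem_insert _ _ _).mpr ⟨hpj, ht⟩

theorem aeval_exp (P : A[X][X]) :
    Polynomial.aeval (exp A) P =
      ∑ i ∈ P.support, (P.coeff i : A⟦X⟧) * rescale (i : A) (exp A) := by
  simp only [aeval_def, eval₂_eq_sum, Polynomial.sum_def, algebraMap_apply',
    Algebra.algebraMap_self, map_id, exp_pow_eq_rescale_exp]
  rfl

end PowerSeries

/-- The formal power series `exp(x) = ∑ x^k/k!` in `ℚ⟦x⟧` is transcendental over `ℚ(x)`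
(equivalently, over `ℚ[x]`): it satisfies no nonzero polynomial equation `P(x, y(x)) = 0`
with `P ∈ ℚ[x][Y]`. -/
theorem exp_transcendental : Transcendental (Polynomial ℚ) (PowerSeries.exp ℚ) := by
  rintro ⟨P, hP, hev⟩
  rw [aeval_exp] at hev
  have hcoeff := forall_eq_zero_of_sum_coe_mul_rescale_exp_eq_zero Nat.cast_injective _ _ hev
  exact hP (support_eq_empty.mp (Finset.eq_empty_of_forall_notMem
    fun i hi => mem_support_iff.mp hi (hcoeff i hi)))
end

section
/- If y ∈ ℚ[[x]] satisfies P(x, y(x)) = 0 for some polynomial P ∈ ℚ[x,Y] of degree n ≥ 1 in Y that is irreducible (or of minimal degree among annihilators of y), then the derivatives y, y', y'', …, y^{(n)} are linearly dependent over ℚ(x); in particular y satisfies a nonzero linear differential equation with coefficients in ℚ(x) of order at most n. -/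
/-!
Embed `ℚ⟦x⟧` in the field `ℚ⸨x⸩` of Laurent series, which also contains `K = ℚ(x)`.
Differentiating `P(y) = 0` gives `P_x(y) + P_Y(y) y' = 0`, where `P_x` differentiates the
coefficients; `P_Y(y) ≠ 0` by minimality of `n`, so `y' ∈ K(y)`. If `g ∈ K(y)`, clear
denominators to get `r g = Q(y)` with `r ∈ ℚ[x]`, `Q ∈ ℚ[x][Y]`; then
`r g' = Q_x(y) + Q_Y(y) y' - r' g`, so `g' ∈ K(y)` as well. Thus `y, y', …, y⁽ⁿ⁾` are `n + 1`
elements of `K(y)`, whose dimension over `K` is at most `n`.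
-/

open Polynomial PowerSeries IntermediateField Module
open scoped Differential LaurentSeries RatFunc

namespace IntermediateField

variable {A K L : Type*} [CommRing A] [Field K] [Field L] [Algebra A K] [Algebra A L]
  [Algebra K L] [IsScalarTower A K L]

theorem mem_of_mul_mem {F : IntermediateField K L} {c z : L} (hc : c ∈ F) (hc0 : c ≠ 0)
    (h : c * z ∈ F) : z ∈ F := by
  simpa [hc0] using F.div_mem h hc

theorem not_linearIndependent_of_forall_mem {ι : Type*} [Fintype ι] (F : IntermediateField K L)
    [FiniteDimensional K F] {v : ι → L} (hv : ∀ i, v i ∈ F)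
    (hcard : finrank K F < Fintype.card ι) : ¬ LinearIndependent K v :=
  fun hli => hcard.not_ge (LinearIndependent.of_comp F.val.toLinearMap
    (v := fun i => (⟨v i, hv i⟩ : F)) hli).fintype_card_le_finrank

variable (K) in
theorem aeval_mem_adjoin_simple (x : L) (Q : A[X]) : aeval x Q ∈ K⟮x⟯ := by
  rw [← aeval_map_algebraMap K]
  exact algebra_adjoin_le_adjoin K {x} (aeval_mem_adjoin_singleton K x)

variable [IsFractionRing A K]

theorem exists_smul_eq_aeval_of_mem_adjoin_simple {x z : L} (hx : IsAlgebraic K x)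
    (hz : z ∈ K⟮x⟯) : ∃ a ∈ nonZeroDivisors A, ∃ Q : A[X], a • z = aeval x Q := by
  rw [← mem_toSubalgebra, adjoin_simple_toSubalgebra_of_isAlgebraic hx,
    Algebra.adjoin_singleton_eq_range_aeval] at hz
  obtain ⟨q, rfl⟩ := hz
  obtain ⟨a, ha, hQ⟩ := IsLocalization.integerNormalization_spec (nonZeroDivisors A) q
  refine ⟨a, ha, IsLocalization.integerNormalization (nonZeroDivisors A) q, ?_⟩
  rw [← aeval_map_algebraMap K, hQ]
  simp [Algebra.smul_def, IsScalarTower.algebraMap_apply A K L]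

theorem finrank_adjoin_simple_le_natDegree {x : L} {P : A[X]} (hP : P ≠ 0)
    (hx : aeval x P = 0) : finrank K K⟮x⟯ ≤ P.natDegree := by
  have hinj := IsFractionRing.injective A K
  have hmap : P.map (algebraMap A K) ≠ 0 := (Polynomial.map_ne_zero_iff hinj).mpr hP
  have hroot : aeval x (P.map (algebraMap A K)) = 0 := by rwa [aeval_map_algebraMap]
  rw [adjoin.finrank (IsAlgebraic.isIntegral ⟨_, hmap, hroot⟩),
    ← natDegree_map_eq_of_injective hinj P]
  exact natDegree_le_natDegree (minpoly.degree_le_of_ne_zero K x hmap hroot)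

end IntermediateField

section Differential

variable {A R K L : Type*} [CommRing A] [CommRing R] [Algebra A R] [Field K] [Algebra A K]
  [Field L] [Algebra R L] [Algebra A L] [Algebra K L] [IsScalarTower A R L] [IsScalarTower A K L]

local notation "ι" => algebraMap R L

variable (K) in
theorem algebraMap_aeval_mem_adjoin_simple (y : R) (Q : A[X]) : ι (aeval y Q) ∈ K⟮ι y⟯ := by
  rw [← aeval_algebraMap_apply]
  exact aeval_mem_adjoin_simple K _ Q

variable [Differential A] [Differential R] [DifferentialAlgebra A R] [FaithfulSMul R L]

theorem algebraMap_deriv_mem_adjoin_simple_of_aeval_eq_zero {y : R} {P : A[X]}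
    (hP : aeval y P = 0) (hP' : aeval y (derivative P) ≠ 0) : ι y′ ∈ K⟮ι y⟯ := by
  have hy' : aeval y (derivative P) * y′ = -aeval y (Differential.mapCoeffs P) := by
    linear_combination (Differential.deriv_aeval_eq y P).symm.trans (by rw [hP, map_zero])
  refine mem_of_mul_mem (algebraMap_aeval_mem_adjoin_simple K y _)
    ((map_ne_zero_iff _ (FaithfulSMul.algebraMap_injective R L)).mpr hP') ?_
  rw [← map_mul, hy', map_neg]
  exact neg_mem (algebraMap_aeval_mem_adjoin_simple K y _)

variable [IsFractionRing A K]

theorem algebraMap_deriv_mem_adjoin_simple {y g : R} (hy : IsAlgebraic A (ι y))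
    (hy' : ι y′ ∈ K⟮ι y⟯) (hg : ι g ∈ K⟮ι y⟯) : ι g′ ∈ K⟮ι y⟯ := by
  obtain ⟨a, ha, Q, hQ⟩ := exists_smul_eq_aeval_of_mem_adjoin_simple (A := A)
    (hy.extendScalars (IsFractionRing.injective A K)) hg
  have hgQ : algebraMap A R a * g = aeval y Q := by
    apply FaithfulSMul.algebraMap_injective R L
    rw [← aeval_algebraMap_apply, ← hQ, map_mul, ← IsScalarTower.algebraMap_apply,
      Algebra.smul_def]
  have hg' : algebraMap A R a * g′ = aeval y (Differential.mapCoeffs Q)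
      + aeval y (derivative Q) * y′ - aeval y (C a′) * g := by
    have := congrArg Differential.deriv hgQ
    rw [Derivation.leibniz, deriv_algebraMap, Differential.deriv_aeval_eq, smul_eq_mul,
      smul_eq_mul] at this
    rw [aeval_C]
    linear_combination this
  have ha0 : algebraMap A L a ≠ 0 := by
    rw [IsScalarTower.algebraMap_apply A K L]
    exact (_root_.map_ne_zero _).mpr (IsLocalization.map_units K ⟨a, ha⟩).ne_zero
  refine mem_of_mul_mem (c := algebraMap A L a) ?_ ha0 ?_
  · rw [IsScalarTower.algebraMap_apply A R L, ← aeval_C (R := A) y]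
    exact algebraMap_aeval_mem_adjoin_simple K y _
  rw [IsScalarTower.algebraMap_apply A R L, ← map_mul, hg', map_sub, map_add, map_mul, map_mul]
  exact sub_mem (add_mem (algebraMap_aeval_mem_adjoin_simple K y _)
    (mul_mem (algebraMap_aeval_mem_adjoin_simple K y _) hy'))
    (mul_mem (algebraMap_aeval_mem_adjoin_simple K y _) hg)

theorem algebraMap_iterate_deriv_mem_adjoin_simple {y : R} (hy : IsAlgebraic A (ι y))
    (hy' : ι y′ ∈ K⟮ι y⟯) (m : ℕ) : ι (Differential.deriv^[m] y) ∈ K⟮ι y⟯ := by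
  induction m with
  | zero => exact mem_adjoin_simple_self K (ι y)
  | succ m ih =>
    rw [Function.iterate_succ_apply']
    exact algebraMap_deriv_mem_adjoin_simple hy hy' ih

variable (K) in
theorem not_linearIndependent_algebraMap_iterate_deriv {y : R} {P : A[X]}
    (hP : aeval y P = 0) (hP' : aeval y (derivative P) ≠ 0) :
    ¬ LinearIndependent K (fun i : Fin (P.natDegree + 1) => ι (Differential.deriv^[i] y)) := by
  have hP0 : P ≠ 0 := by
    rintro rfl
    simp at hP'
  have hroot : aeval (ι y) P = 0 := by rw [aeval_algebraMap_apply, hP, map_zero]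
  have hy : IsAlgebraic A (ι y) := ⟨P, hP0, hroot⟩
  have := adjoin.finiteDimensional (hy.extendScalars (IsFractionRing.injective A K)).isIntegral
  refine not_linearIndependent_of_forall_mem K⟮ι y⟯ (fun i => ?_) ?_
  · exact algebraMap_iterate_deriv_mem_adjoin_simple hy
      (algebraMap_deriv_mem_adjoin_simple_of_aeval_eq_zero hP hP') i
  · rw [Fintype.card_fin]
    exact Nat.lt_succ_of_le (finrank_adjoin_simple_le_natDegree hP0 hroot)

end Differential

-- The `ℤ`-algebra structure is given explicitly: the one synthesized for `R⟦X⟧` is not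
-- reducibly equal to the `Ring.toIntAlgebra` that `Differential` expects.
noncomputable instance PowerSeries.instDifferential {R : Type*} [CommRing R] :
    Differential R⟦X⟧ :=
  ⟨@Derivation.mk' ℤ _ R⟦X⟧ _ (Ring.toIntAlgebra _) R⟦X⟧ _ (AddCommGroup.toIntModule _) _
    (d⁄dX R).toAddMonoidHom.toIntLinearMap (d⁄dX R).leibniz⟩

noncomputable instance Polynomial.instDifferential {R : Type*} [CommRing R] :
    Differential R[X] :=
  ⟨derivative'.restrictScalars ℤ⟩

instance {R : Type*} [CommRing R] : DifferentialAlgebra R[X] R⟦X⟧ :=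
  ⟨fun a => by
    simp only [PowerSeries.algebraMap_apply', Algebra.algebraMap_self]
    exact derivative_coe a⟩

instance {R : Type*} [CommRing R] : IsScalarTower R[X] R⟦X⟧ R⸨X⸩ :=
  .of_algebraMap_eq' rfl

theorem algebraic_powerSeries_isDFinite_general
    (y : PowerSeries ℚ) (n : ℕ) (hn : 1 ≤ n)
    (P : Polynomial (Polynomial ℚ)) (hdeg : P.natDegree = n)
    (hroot : Polynomial.aeval y P = 0)
    (hmin : ∀ Q : Polynomial (Polynomial ℚ), Q ≠ 0 → Polynomial.aeval y Q = 0 →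
      n ≤ Q.natDegree) :
    ∃ a : Fin (n + 1) → Polynomial ℚ, (∃ i, a i ≠ 0) ∧
      ∑ i : Fin (n + 1), (a i : PowerSeries ℚ) *
        (PowerSeries.derivativeFun)^[(i : ℕ)] y = 0 := by
  have hP' : aeval y (derivative P) ≠ 0 := by
    intro h
    have hP'0 : derivative P ≠ 0 := fun h0 => by have := derivative_eq_zero.mp h0; omega
    have := natDegree_derivative_lt (p := P) (by omega)
    have := hmin _ hP'0 h
    omega
  have hK := not_linearIndependent_algebraMap_iterate_deriv (L := ℚ⸨X⸩) (RatFunc ℚ) hroot hP'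
  rw [hdeg, ← LinearIndependent.iff_fractionRing ℚ[X] (RatFunc ℚ)] at hK
  have hA : ¬ LinearIndependent ℚ[X] (fun i : Fin (n + 1) => (d⁄dX ℚ)^[i] y) :=
    fun h => hK (h.map' (IsScalarTower.toAlgHom ℚ[X] ℚ⟦X⟧ ℚ⸨X⸩).toLinearMap
      (LinearMap.ker_eq_bot.mpr (FaithfulSMul.algebraMap_injective ℚ⟦X⟧ ℚ⸨X⸩)))
  obtain ⟨a, ha, i, hi⟩ := Fintype.not_linearIndependent_iff.mp hA
  have hsum : ∑ i, (a i : ℚ⟦X⟧) * (d⁄dX ℚ)^[i] y = 0 := by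
    simpa [Algebra.smul_def, PowerSeries.algebraMap_apply'] using ha
  exact ⟨a, ⟨i, hi⟩, hsum⟩

/-- **Abel's theorem**: if `y ∈ ℚ⟦x⟧` is a root of a polynomial `P ∈ ℚ[x][Y]` of degree
`n ≥ 1` in `Y` which has minimal degree among the annihilators of `y`, then the formal
derivatives `y, y', …, y⁽ⁿ⁾` are linearly dependent over `ℚ(x)` (equivalently, after
clearing denominators, over `ℚ[x]`); in particular `y` satisfies a nonzero linear
differential equation with rational-function coefficients of order at most `n`. -/
theorem algebraic_powerSeries_isDFinite
    (y : PowerSeries ℚ) (n : ℕ) (hn : 1 ≤ n)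
    (P : Polynomial (Polynomial ℚ)) (hP : P ≠ 0) (hdeg : P.natDegree = n)
    (hroot : Polynomial.aeval y P = 0)
    (hmin : ∀ Q : Polynomial (Polynomial ℚ), Q ≠ 0 → Polynomial.aeval y Q = 0 →
      n ≤ Q.natDegree) :
    ∃ a : Fin (n + 1) → Polynomial ℚ, (∃ i, a i ≠ 0) ∧
      ∑ i : Fin (n + 1), (a i : PowerSeries ℚ) *
        (PowerSeries.derivativeFun)^[(i : ℕ)] y = 0 :=
  algebraic_powerSeries_isDFinite_general y n hn P hdeg hroot hmin
end

section
/- Let p be a prime and b(x) ∈ 𝔽_p(x). The first-order differential equation y' + b(x)·y = 0 has a nonzero solution in 𝔽_p(x) if and only if b(x) has at most simple poles, all residues of b(x) lie in the prime field 𝔽_p (viewed inside the algebraic closure), and b(x) vanishes at infinity (i.e. in the partial fraction decomposition of b(x) the polynomial part is zero). -/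
/-! If `f ≠ 0` solves the equation then `-b = f'/f`, and over the algebraic closure a
logarithmic derivative is `∑ₐ (ord_a f) / (x - a)`: simple poles, no polynomial part, and
integer residues, i.e. residues in `𝔽_p`.

Conversely, applying an automorphism `ψ` of `𝔽̄_p` to `b = ∑ₐ βₐ / (x - a)` fixes `b`, so by
uniqueness of partial fractions `β` is constant on Galois orbits. Hence `b` is a sum of terms
`c · q'/q` with `q` the minimal polynomial of an orbit and `c ∈ 𝔽_p`, and `c · q'/q` is the
logarithmic derivative of `q ^ c.val`; the product of these powers solves the equation. -/

open Polynomial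

/-- Formal derivative of a rational function, via the quotient rule on the
canonical numerator/denominator representation. -/
noncomputable def rderiv {F : Type*} [Field F] (f : RatFunc F) : RatFunc F :=
  algebraMap (Polynomial F) (RatFunc F)
      (Polynomial.derivative f.num * f.denom - f.num * Polynomial.derivative f.denom) /
    algebraMap (Polynomial F) (RatFunc F) (f.denom ^ 2)

/-- Base change of a rational function along a field embedding `f : F →+* L`. -/
noncomputable def liftRF {F L : Type*} [Field F] [Field L] (f : F →+* L)
    (b : RatFunc F) : RatFunc L :=
  algebraMap (Polynomial L) (RatFunc L) (b.num.map f) /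
    algebraMap (Polynomial L) (RatFunc L) (b.denom.map f)

section Derivative

variable {F : Type*} [Field F]

local notation "ι" => algebraMap F[X] (RatFunc F)

theorem rderiv_div_algebraMap (P : F[X]) {Q : F[X]} (hQ : Q ≠ 0) :
    rderiv (ι P / ι Q) = ι (derivative P * Q - P * derivative Q) / ι (Q ^ 2) := by
  set f := ι P / ι Q
  have hf : f.num * Q = P * f.denom := by
    apply RatFunc.algebraMap_injective F
    have h := RatFunc.num_div_denom f
    rw [div_eq_div_iff (RatFunc.algebraMap_ne_zero f.denom_ne_zero)
      (RatFunc.algebraMap_ne_zero hQ)] at h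
    simpa only [map_mul] using h
  have hf' : derivative f.num * Q + f.num * derivative Q
      = derivative P * f.denom + P * derivative f.denom := by
    simpa only [derivative_mul] using congrArg derivative hf
  rw [rderiv, div_eq_div_iff (RatFunc.algebraMap_ne_zero (pow_ne_zero 2 f.denom_ne_zero))
    (RatFunc.algebraMap_ne_zero (pow_ne_zero 2 hQ)), ← map_mul, ← map_mul]
  congr 1
  linear_combination (Q * f.denom) * hf' - (derivative f.denom * Q + derivative Q * f.denom) * hf

theorem rderiv_algebraMap (P : F[X]) : rderiv (ι P) = ι (derivative P) := by
  simpa using rderiv_div_algebraMap P one_ne_zero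

theorem rderiv_mul (f g : RatFunc F) : rderiv (f * g) = rderiv f * g + f * rderiv g := by
  rw [← RatFunc.num_div_denom f, ← RatFunc.num_div_denom g, div_mul_div_comm, ← map_mul,
    ← map_mul, rderiv_div_algebraMap _ (mul_ne_zero f.denom_ne_zero g.denom_ne_zero),
    rderiv_div_algebraMap _ f.denom_ne_zero, rderiv_div_algebraMap _ g.denom_ne_zero]
  have := RatFunc.algebraMap_ne_zero f.denom_ne_zero
  have := RatFunc.algebraMap_ne_zero g.denom_ne_zero
  simp only [derivative_mul, map_mul, map_sub, map_add, map_pow]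
  field_simp
  ring

end Derivative

noncomputable abbrev invXSubC {K : Type*} [Field K] (a : K) : RatFunc K :=
  (RatFunc.X - RatFunc.C a)⁻¹

section LogDeriv

variable {F : Type*} [Field F]

local notation "ι" => algebraMap F[X] (RatFunc F)

noncomputable def rlogDeriv (f : RatFunc F) : RatFunc F := rderiv f / f

theorem rderiv_add_mul_eq_zero_iff {f : RatFunc F} (hf : f ≠ 0) (b : RatFunc F) :
    rderiv f + b * f = 0 ↔ rlogDeriv f = -b := by
  rw [rlogDeriv, div_eq_iff hf, neg_mul, eq_neg_iff_add_eq_zero]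

theorem rlogDeriv_mul {f g : RatFunc F} (hf : f ≠ 0) (hg : g ≠ 0) :
    rlogDeriv (f * g) = rlogDeriv f + rlogDeriv g := by
  rw [rlogDeriv, rlogDeriv, rlogDeriv, rderiv_mul]
  field_simp

theorem rlogDeriv_div {f g : RatFunc F} (hf : f ≠ 0) (hg : g ≠ 0) :
    rlogDeriv (f / g) = rlogDeriv f - rlogDeriv g := by
  conv_rhs => rw [← div_mul_cancel₀ f hg, rlogDeriv_mul (div_ne_zero hf hg) hg]
  ring

theorem rlogDeriv_one : rlogDeriv (1 : RatFunc F) = 0 := by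
  rw [rlogDeriv, ← map_one ι, rderiv_algebraMap, derivative_one, map_zero, zero_div]

theorem rlogDeriv_pow {f : RatFunc F} (hf : f ≠ 0) (n : ℕ) :
    rlogDeriv (f ^ n) = n * rlogDeriv f := by
  induction n with
  | zero => rw [pow_zero, Nat.cast_zero, zero_mul, rlogDeriv_one]
  | succ n ih => rw [pow_succ, rlogDeriv_mul (pow_ne_zero n hf) hf, ih]; push_cast; ring

theorem rlogDeriv_algebraMap (P : F[X]) : rlogDeriv (ι P) = ι (derivative P) / ι P := by
  rw [rlogDeriv, rderiv_algebraMap]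

theorem rlogDeriv_multiset_prod_X_sub_C (m : Multiset F) :
    rlogDeriv (ι (m.map (X - C ·)).prod) = (m.map invXSubC).sum := by
  induction m using Multiset.induction_on with
  | empty => rw [Multiset.map_zero, Multiset.prod_zero, map_one, rlogDeriv_one, Multiset.map_zero,
      Multiset.sum_zero]
  | cons r m ih =>
    have hprod : ι (m.map (X - C ·)).prod ≠ 0 := RatFunc.algebraMap_ne_zero
      (monic_multiset_prod_of_monic _ _ fun a _ => monic_X_sub_C a).ne_zero
    rw [Multiset.map_cons, Multiset.prod_cons, map_mul,
      rlogDeriv_mul (RatFunc.algebraMap_ne_zero (X_sub_C_ne_zero r)) hprod, ih,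
      rlogDeriv_algebraMap, Multiset.map_cons, Multiset.sum_cons]
    simp [invXSubC, one_div]

theorem rlogDeriv_algebraMap_eq_sum_roots [IsAlgClosed F] {P : F[X]} (hP : P ≠ 0) :
    rlogDeriv (ι P) = (P.roots.map invXSubC).sum := by
  conv_lhs => rw [← C_leadingCoeff_mul_prod_multiset_X_sub_C
    (splits_iff_card_roots.mp (IsAlgClosed.splits P))]
  rw [map_mul, rlogDeriv_mul (RatFunc.algebraMap_ne_zero (by simpa using hP))
    (RatFunc.algebraMap_ne_zero (monic_multiset_prod_of_monic _ _
      fun a _ => monic_X_sub_C a).ne_zero), rlogDeriv_multiset_prod_X_sub_C, rlogDeriv_algebraMap]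
  simp

end LogDeriv

section BaseChange

variable {F L M : Type*} [Field F] [Field L] [Field M] (φ : F →+* L)

theorem nonZeroDivisors_le_comap_mapRingHom :
    nonZeroDivisors F[X] ≤ (nonZeroDivisors L[X]).comap (mapRingHom φ) := fun P hP => by
  simpa [mem_nonZeroDivisors_iff_ne_zero, Polynomial.map_eq_zero_iff φ.injective] using hP

noncomputable def liftRFHom : RatFunc F →+* RatFunc L :=
  RatFunc.mapRingHom (mapRingHom φ) (nonZeroDivisors_le_comap_mapRingHom φ)

theorem liftRFHom_div_algebraMap (P Q : F[X]) :
    liftRFHom φ (algebraMap F[X] (RatFunc F) P / algebraMap F[X] (RatFunc F) Q) =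
      algebraMap L[X] (RatFunc L) (P.map φ) / algebraMap L[X] (RatFunc L) (Q.map φ) :=
  RatFunc.map_apply_div _ (nonZeroDivisors_le_comap_mapRingHom φ) P Q

theorem liftRF_eq_liftRFHom : liftRF φ = liftRFHom φ := by
  ext b
  conv_rhs => rw [← RatFunc.num_div_denom b]
  rw [liftRF, liftRFHom_div_algebraMap]

theorem liftRFHom_algebraMap (P : F[X]) :
    liftRFHom φ (algebraMap F[X] (RatFunc F) P) = algebraMap L[X] (RatFunc L) (P.map φ) := by
  simpa using liftRFHom_div_algebraMap φ P 1

theorem liftRFHom_C (c : F) : liftRFHom φ (RatFunc.C c) = RatFunc.C (φ c) := by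
  rw [← RatFunc.algebraMap_C, liftRFHom_algebraMap, Polynomial.map_C, RatFunc.algebraMap_C]

theorem liftRFHom_X : liftRFHom φ RatFunc.X = RatFunc.X := by
  rw [← RatFunc.algebraMap_X, liftRFHom_algebraMap, Polynomial.map_X, RatFunc.algebraMap_X]

theorem liftRFHom_invXSubC (a : F) : liftRFHom φ (invXSubC a) = invXSubC (φ a) := by
  rw [invXSubC, map_inv₀, map_sub, liftRFHom_X, liftRFHom_C]

theorem liftRFHom_injective : Function.Injective (liftRFHom φ) :=
  RatFunc.map_injective _ (nonZeroDivisors_le_comap_mapRingHom φ)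
    (Polynomial.map_injective φ φ.injective)

theorem liftRFHom_liftRFHom (ψ : L →+* M) (f : RatFunc F) :
    liftRFHom ψ (liftRFHom φ f) = liftRFHom (ψ.comp φ) f := by
  rw [← RatFunc.num_div_denom f, liftRFHom_div_algebraMap, liftRFHom_div_algebraMap,
    liftRFHom_div_algebraMap, Polynomial.map_map, Polynomial.map_map]

theorem rderiv_liftRFHom (f : RatFunc F) : rderiv (liftRFHom φ f) = liftRFHom φ (rderiv f) := by
  rw [← RatFunc.num_div_denom f, liftRFHom_div_algebraMap,
    rderiv_div_algebraMap _ ((Polynomial.map_ne_zero_iff φ.injective).mpr f.denom_ne_zero),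
    rderiv_div_algebraMap _ f.denom_ne_zero, liftRFHom_div_algebraMap]
  simp only [Polynomial.map_sub, Polynomial.map_mul, Polynomial.map_pow, derivative_map]

theorem rlogDeriv_liftRFHom (f : RatFunc F) :
    rlogDeriv (liftRFHom φ f) = liftRFHom φ (rlogDeriv f) := by
  rw [rlogDeriv, rlogDeriv, rderiv_liftRFHom, map_div₀]

end BaseChange

open Lagrange in
theorem linearIndependent_invXSubC (K : Type*) [Field K] :
    LinearIndependent K (invXSubC (K := K)) := by
  classical
  rw [linearIndependent_iff']
  intro s g hg i hi
  have hcleared : ∑ j ∈ s, C (g j) * nodal (s.erase j) id = 0 := by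
    apply RatFunc.algebraMap_injective K
    rw [map_zero, ← zero_mul (algebraMap K[X] (RatFunc K) (nodal s id)), ← hg, Finset.sum_mul,
      map_sum]
    refine Finset.sum_congr rfl fun j hj => ?_
    have hXj : RatFunc.X - RatFunc.C j ≠ 0 := by
      simpa [← RatFunc.algebraMap_X, ← RatFunc.algebraMap_C] using
        RatFunc.algebraMap_ne_zero (X_sub_C_ne_zero j)
    rw [nodal_eq_mul_nodal_erase hj, map_mul, map_mul, RatFunc.smul_eq_C_mul, map_sub,
      RatFunc.algebraMap_X, RatFunc.algebraMap_C, RatFunc.algebraMap_C, id, invXSubC]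
    field_simp
  have heval := congrArg (eval i) hcleared
  rw [eval_finsetSum, eval_zero, Finset.sum_eq_single i
    (fun j _ hji => by
      rw [eval_mul]
      exact mul_eq_zero_of_right _
        (eval_nodal_at_node (v := id) (Finset.mem_erase.mpr ⟨hji.symm, hi⟩)))
    (fun h => absurd hi h), eval_mul, eval_C] at heval
  exact (mul_eq_zero.mp heval).resolve_right
    (eval_nodal_not_at_node fun j hj => (Finset.ne_of_mem_erase hj).symm)

theorem exists_fin_injective_eq_sum_iff {α R M : Type*} [Semiring R] [AddCommMonoid M]
    [Module R M] (v : α → M) (x : M) :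
    (∃ (m : ℕ) (a : Fin m → α) (β : Fin m → R),
        Function.Injective a ∧ x = ∑ i, β i • v (a i)) ↔
      ∃ w : α →₀ R, x = Finsupp.linearCombination R v w := by
  constructor
  · rintro ⟨m, a, β, -, rfl⟩
    exact ⟨∑ i, Finsupp.single (a i) (β i), by simp⟩
  · rintro ⟨w, rfl⟩
    let e := w.support.equivFin.symm
    refine ⟨w.support.card, fun i => e i, fun i => w (e i),
      fun i j h => e.injective (Subtype.ext h), ?_⟩
    rw [Finsupp.linearCombination_apply, Finsupp.sum, ← Finset.sum_coe_sort]
    exact (e.sum_comp fun x => w x • v x).symm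

theorem exists_rlogDeriv_eq_linearCombination {K : Type*} [Field K] [IsAlgClosed K]
    (R : Type*) [Ring R] [Module R (RatFunc K)] {g : RatFunc K} (hg : g ≠ 0) :
    ∃ w : K →₀ R, rlogDeriv g = Finsupp.linearCombination R invXSubC w := by
  have hsum (m : Multiset K) : (m.map invXSubC).sum =
      Finsupp.linearCombination R invXSubC (m.map (Finsupp.single · 1)).sum := by
    simp [map_multiset_sum, Multiset.map_map]
  refine ⟨(g.num.roots.map (Finsupp.single · 1)).sum - (g.denom.roots.map (Finsupp.single · 1)).sum,
    ?_⟩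
  conv_lhs => rw [← RatFunc.num_div_denom g]
  rw [rlogDeriv_div (RatFunc.algebraMap_ne_zero (RatFunc.num_ne_zero hg))
    (RatFunc.algebraMap_ne_zero g.denom_ne_zero), rlogDeriv_algebraMap_eq_sum_roots
    (RatFunc.num_ne_zero hg), rlogDeriv_algebraMap_eq_sum_roots g.denom_ne_zero, hsum, hsum,
    map_sub]

theorem zmod_smul_eq_C_mul {n : ℕ} {L : Type*} [Field L] [Algebra (ZMod n) L] (c : ZMod n)
    (y : RatFunc L) : c • y = RatFunc.C (algebraMap (ZMod n) L c) * y := by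
  rw [Algebra.smul_def,
    RingHom.ext_zmod (algebraMap (ZMod n) (RatFunc L)) (RatFunc.C.comp (algebraMap (ZMod n) L)),
    RingHom.comp_apply]

section PrimeField

open scoped Classical

variable {p : ℕ} [Fact p.Prime]

local notation "K" => AlgebraicClosure (ZMod p)

local notation "ι" => algebraMap (ZMod p) K

theorem linearIndependent_zmod_invXSubC :
    LinearIndependent (ZMod p) (invXSubC : K → RatFunc K) :=
  (linearIndependent_invXSubC K).restrict_scalars' (ZMod p)

theorem apply_algHom_eq_of_liftRFHom_eq {b : RatFunc (ZMod p)} {w : K →₀ ZMod p}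
    (hb : liftRFHom ι b = Finsupp.linearCombination (ZMod p) invXSubC w)
    (ψ : K →ₐ[ZMod p] K) (x : K) : w (ψ x) = w x := by
  have hfix : liftRFHom (ψ : K →+* K) (liftRFHom ι b) = liftRFHom ι b := by
    rw [liftRFHom_liftRFHom, AlgHom.comp_algebraMap]
  have hconj : liftRFHom (ψ : K →+* K) (Finsupp.linearCombination (ZMod p) invXSubC w) =
      Finsupp.linearCombination (ZMod p) invXSubC (w.mapDomain ψ) := by
    let Λ := (liftRFHom (ψ : K →+* K)).toAddMonoidHom.toZModLinearMap p
    have hΛ : Λ ∘ invXSubC = invXSubC ∘ ψ := funext (liftRFHom_invXSubC (ψ : K →+* K))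
    rw [Finsupp.linearCombination_mapDomain, ← hΛ, ← Finsupp.apply_linearCombination]
    rfl
  have hw : w.mapDomain ψ = w :=
    linearIndependent_zmod_invXSubC (by rw [← hconj, ← hb, hfix])
  calc w (ψ x) = w.mapDomain ψ (ψ x) := by rw [hw]
    _ = w x := Finsupp.mapDomain_apply ψ.toRingHom.injective w x

noncomputable def conjugateRoots (a : K) : Finset K :=
  ((minpoly (ZMod p) a).aroots K).toFinset

theorem mem_conjugateRoots_self (a : K) : a ∈ conjugateRoots a := by
  rw [conjugateRoots, Multiset.mem_toFinset, mem_aroots]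
  exact ⟨minpoly.ne_zero (Algebra.IsIntegral.isIntegral a), minpoly.aeval _ a⟩

theorem apply_eq_of_mem_conjugateRoots {b : RatFunc (ZMod p)} {w : K →₀ ZMod p}
    (hb : liftRFHom ι b = Finsupp.linearCombination (ZMod p) invXSubC w) {a r : K}
    (hr : r ∈ conjugateRoots a) : w r = w a := by
  have hroot : r ∈ (minpoly (ZMod p) a).rootSet K :=
    mem_rootSet.mpr (mem_aroots.mp (Multiset.mem_toFinset.mp hr))
  rw [← Algebra.IsAlgebraic.range_eval_eq_rootSet_minpoly (F := ZMod p) K a] at hroot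
  obtain ⟨ψ, rfl⟩ := hroot
  exact apply_algHom_eq_of_liftRFHom_eq hb ψ a

theorem liftRFHom_rlogDeriv_minpoly (a : K) :
    liftRFHom ι (rlogDeriv (algebraMap _ (RatFunc (ZMod p)) (minpoly (ZMod p) a))) =
      ∑ r ∈ conjugateRoots a, invXSubC r := by
  have hint := Algebra.IsIntegral.isIntegral (R := ZMod p) a
  have hsep : (minpoly (ZMod p) a).Separable :=
    PerfectField.separable_of_irreducible (minpoly.irreducible hint)
  rw [← rlogDeriv_liftRFHom, liftRFHom_algebraMap, rlogDeriv_algebraMap_eq_sum_roots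
    ((Polynomial.map_ne_zero_iff (RingHom.injective _)).mpr (minpoly.ne_zero hint)), conjugateRoots,
    Finset.sum_eq_multiset_sum, Multiset.toFinset_val, (nodup_roots hsep.map).dedup]

theorem exists_liftRFHom_rlogDeriv_eq_filter {b : RatFunc (ZMod p)} {w : K →₀ ZMod p}
    (hb : liftRFHom ι b = Finsupp.linearCombination (ZMod p) invXSubC w) (a : K) :
    ∃ f ≠ 0, liftRFHom ι (rlogDeriv f) =
      Finsupp.linearCombination (ZMod p) invXSubC (w.filter (· ∈ conjugateRoots a)) := by
  have hq : algebraMap _ (RatFunc (ZMod p)) (minpoly (ZMod p) a) ≠ 0 :=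
    RatFunc.algebraMap_ne_zero (minpoly.ne_zero (Algebra.IsIntegral.isIntegral a))
  refine ⟨_ ^ (w a).val, pow_ne_zero _ hq, ?_⟩
  rw [rlogDeriv_pow hq, map_mul, map_natCast, liftRFHom_rlogDeriv_minpoly, Finset.mul_sum,
    Finsupp.linearCombination_apply_of_mem_supported (ZMod p) (s := conjugateRoots a)
      (Finsupp.mem_supported _ _ |>.mpr fun x hx => by
        rw [Finset.mem_coe, Finsupp.support_filter] at hx; exact (Finset.mem_filter.mp hx).2)]
  refine Finset.sum_congr rfl fun r hr => ?_
  rw [Finsupp.filter_apply_pos _ _ hr, apply_eq_of_mem_conjugateRoots hb hr, ← nsmul_eq_mul,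
    ← Nat.cast_smul_eq_nsmul (ZMod p), ZMod.natCast_zmod_val]

theorem exists_rlogDeriv_eq_of_liftRFHom_eq {b : RatFunc (ZMod p)} {w : K →₀ ZMod p}
    (hb : liftRFHom ι b = Finsupp.linearCombination (ZMod p) invXSubC w) :
    ∃ f ≠ 0, rlogDeriv f = b := by
  induction hn : w.support.card using Nat.strong_induction_on generalizing w b with
  | _ n ih =>
  rcases eq_or_ne w 0 with rfl | hw
  · refine ⟨1, one_ne_zero, ?_⟩
    apply liftRFHom_injective ι
    rw [rlogDeriv_one, hb, map_zero, map_zero]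
  obtain ⟨a, ha⟩ := Finsupp.support_nonempty_iff.mpr hw
  obtain ⟨f₀, hf₀, hf₀w⟩ := exists_liftRFHom_rlogDeriv_eq_filter hb a
  have hb₂ : liftRFHom ι (b - rlogDeriv f₀) =
      Finsupp.linearCombination (ZMod p) invXSubC (w.filter (· ∉ conjugateRoots a)) := by
    rw [map_sub, hb, hf₀w, sub_eq_iff_eq_add', ← map_add, Finsupp.filter_add_filter_not]
  have hcard : (w.filter (· ∉ conjugateRoots a)).support.card < n := by
    rw [← hn, Finsupp.support_filter]
    exact Finset.card_lt_card
      (Finset.filter_ssubset.mpr ⟨a, ha, not_not.mpr (mem_conjugateRoots_self a)⟩)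
  obtain ⟨f₂, hf₂, hf₂b⟩ := ih _ hcard hb₂ rfl
  exact ⟨f₂ * f₀, mul_ne_zero hf₂ hf₀, by rw [rlogDeriv_mul hf₂ hf₀, hf₂b, sub_add_cancel]⟩

theorem exists_rlogDeriv_eq_iff (b : RatFunc (ZMod p)) :
    (∃ f ≠ 0, rlogDeriv f = b) ↔
      ∃ w : K →₀ ZMod p, liftRFHom ι b = Finsupp.linearCombination (ZMod p) invXSubC w := by
  refine ⟨fun ⟨f, hf, hfb⟩ => ?_, fun ⟨w, hw⟩ => exists_rlogDeriv_eq_of_liftRFHom_eq hw⟩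
  obtain ⟨w, hw⟩ := exists_rlogDeriv_eq_linearCombination (ZMod p)
    ((map_ne_zero (liftRFHom ι)).mpr hf)
  exact ⟨w, by rw [← hfb, ← rlogDeriv_liftRFHom, hw]⟩

end PrimeField

/-- Let `p` be a prime and `b(x) ∈ 𝔽_p(x)`.  The equation `y' + b(x)y = 0` has a
nonzero solution in `𝔽_p(x)` if and only if, over the algebraic closure of `𝔽_p`,
`b(x)` has at most simple poles, all its residues lie in the prime field `𝔽_p`, and
`b(x)` vanishes at infinity; i.e. iff `b(x) = ∑ᵢ βᵢ/(x − aᵢ)` with the `aᵢ` distinct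
points of the algebraic closure and `βᵢ ∈ 𝔽_p`. -/
theorem order_one_rational_solution_charP (p : ℕ) [Fact p.Prime]
    (b : RatFunc (ZMod p)) :
    (∃ f : RatFunc (ZMod p), f ≠ 0 ∧ rderiv f + b * f = 0) ↔
      ∃ (m : ℕ) (a : Fin m → AlgebraicClosure (ZMod p)) (β : Fin m → ZMod p),
        Function.Injective a ∧
        liftRF (algebraMap (ZMod p) (AlgebraicClosure (ZMod p))) b =
          ∑ i : Fin m,
            RatFunc.C (algebraMap (ZMod p) (AlgebraicClosure (ZMod p)) (β i)) *
              (RatFunc.X - RatFunc.C (a i))⁻¹ := by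
  simp_rw [← zmod_smul_eq_C_mul, liftRF_eq_liftRFHom]
  rw [exists_fin_injective_eq_sum_iff invXSubC]
  calc (∃ f : RatFunc (ZMod p), f ≠ 0 ∧ rderiv f + b * f = 0)
      ↔ ∃ f ≠ 0, rlogDeriv f = -b :=
        exists_congr fun f => and_congr_right fun hf => rderiv_add_mul_eq_zero_iff hf b
    _ ↔ ∃ w : AlgebraicClosure (ZMod p) →₀ ZMod p, liftRFHom _ (-b) =
          Finsupp.linearCombination (ZMod p) invXSubC w := exists_rlogDeriv_eq_iff (-b)
    _ ↔ _ := by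
      refine (Equiv.neg _).exists_congr fun w => ?_
      rw [Equiv.neg_apply, map_neg, map_neg, neg_eq_iff_eq_neg]
end

section
/- Let p be a prime and b(x) ∈ 𝔽_p(x). In the ring 𝔽_p(x)⟨∂⟩ of differential operators (with ∂·r = r·∂ + r'), one has (∂ + b(x))^p = ∂^p + b_p(x), where b_p = b^{(p−1)} + b^p; moreover b_p(x) lies in 𝔽_p(x^p), i.e. its derivative is zero. -/
open Polynomial

/-- Multiplication in the Ore ring `F(x)⟨∂⟩` of linear differential operators,
where an operator `∑ aᵢ ∂^i` is represented by the polynomial `∑ aᵢ Xⁱ` with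
coefficients in `F(x)`; it is governed by the rule `∂·r = r·∂ + r'`, so that
`(a ∂^i)·(b ∂^j) = ∑_{l ≤ i} C(i,l)·a·b⁽ˡ⁾·∂^{i−l+j}`. -/
noncomputable def omul {F : Type*} [Field F]
    (A B : Polynomial (RatFunc F)) : Polynomial (RatFunc F) :=
  A.sum fun i a => B.sum fun j b =>
    ∑ l ∈ Finset.range (i + 1),
      Polynomial.monomial (i - l + j) ((i.choose l : RatFunc F) * a * rderiv^[l] b)

/-- Powers in the Ore ring `F(x)⟨∂⟩`. -/
noncomputable def opow {F : Type*} [Field F]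
    (A : Polynomial (RatFunc F)) : ℕ → Polynomial (RatFunc F)
  | 0 => 1
  | k + 1 => omul (opow A k) A


/-!
Identify `K⟨∂⟩` with `K[X]` through `∑ aᵢ ∂ⁱ ↦ ∑ aᵢ Xⁱ` and let operators act on it by left
multiplication: `∂` acts as `q ↦ q' + X q` (coefficientwise derivative plus shift). This is an
honest ring action and `omul A B` is the action of `A` on `B`, so `opow A n` is the `n`-th power
of the action of `A` applied to `1`. The operator `∂ + b` acts as the sum of the commuting
operators `X·` and `(·)' + b·`, so in characteristic `p` its `p`-th power applied to `1` is
`Xᵖ + w` with `w = (∂ + b)ᵖ 1 ∈ K`.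

To compute `w`, introduce a parameter `t` and let `E = ∂ + t b` act on `K[t]`. From
`[d/dt, E] = b` and `[E, a] = a'` one gets `d/dt (Eᵖ 1) = ∑ⱼ C(p, j+1) b⁽ʲ⁾ Eᵖ⁻¹⁻ʲ 1 = b⁽ᵖ⁻¹⁾`.
Since `Eᵖ 1` has degree `≤ p` in `t`, no constant term and leading coefficient `bᵖ`, it equals
`b⁽ᵖ⁻¹⁾ t + bᵖ tᵖ`, and `t = 1` gives `w = b⁽ᵖ⁻¹⁾ + bᵖ`. Finally `(b⁽ᵖ⁻¹⁾ + bᵖ)' = b⁽ᵖ⁾ = 0`,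
because every `f ∈ F(x)` is `g / hᵖ` with `hᵖ` a constant and `∂ᵖ` kills polynomials.
-/

open Finset

theorem mul_pow_succ_eq_pow_succ_mul_add_sum {S ι : Type*} [Semiring S] (δ e : S) (m : ι → S)
    (σ : ι → ι) (γ : ι) (hm : ∀ a, e * m a = m a * e + m (σ a)) (hδ : δ * e = e * δ + m γ)
    (n : ℕ) :
    δ * e ^ (n + 1) = e ^ (n + 1) * δ +
      ∑ j ∈ range (n + 1), (n + 1).choose (j + 1) • (m (σ^[j] γ) * e ^ (n - j)) := by
  induction n with
  | zero => simp [hδ]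
  | succ n ih =>
    set g : ℕ → ℕ → S := fun j k => m (σ^[j] γ) * e ^ k
    have hlow : ∑ j ∈ range (n + 2), (n + 1).choose (j + 1) • g j (n + 1 - j)
        = ∑ j ∈ range (n + 1), (n + 1).choose (j + 1) • (m (σ^[j] γ) * e * e ^ (n - j)) := by
      rw [sum_range_succ, Nat.choose_succ_self, zero_smul, add_zero]
      refine sum_congr rfl fun j hj => ?_
      rw [mul_assoc, ← pow_succ', Nat.sub_add_comm (mem_range_succ_iff.mp hj)]
    have hhigh : ∑ j ∈ range (n + 2), (n + 1).choose j • g j (n + 1 - j)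
        = ∑ j ∈ range (n + 1), (n + 1).choose (j + 1) • (m (σ^[j + 1] γ) * e ^ (n - j))
          + m γ * e ^ (n + 1) := by
      simp [sum_range_succ' _ (n + 1), g]
    have hpascal : ∀ j ∈ range (n + 2), (n + 2).choose (j + 1) • g j (n + 1 - j)
        = (n + 1).choose (j + 1) • g j (n + 1 - j) + (n + 1).choose j • g j (n + 1 - j) :=
      fun j _ => by rw [Nat.choose_succ_succ', add_smul, add_comm]
    calc δ * e ^ (n + 2) = e * (δ * e ^ (n + 1)) + m γ * e ^ (n + 1) := by
          rw [pow_succ' e (n + 1), ← mul_assoc, hδ, add_mul, mul_assoc]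
      _ = e ^ (n + 2) * δ
            + ∑ j ∈ range (n + 1), (n + 1).choose (j + 1) • (m (σ^[j] γ) * e * e ^ (n - j))
            + ∑ j ∈ range (n + 1), (n + 1).choose (j + 1) • (m (σ^[j + 1] γ) * e ^ (n - j))
            + m γ * e ^ (n + 1) := by
          simp only [ih, mul_add, mul_sum, mul_smul_comm, ← mul_assoc, hm, add_mul, smul_add,
            sum_add_distrib, ← pow_succ', Function.iterate_succ_apply']
          abel
      _ = _ := by
          rw [sum_congr rfl hpascal, sum_add_distrib, hlow, hhigh]
          abel

namespace Polynomial

theorem iterate_derivative_eq_zero_of_charP {R : Type*} [Semiring R] (p : ℕ) [NeZero p]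
    [CharP R p] (P : R[X]) : derivative^[p] P = 0 := by
  rw [← factorial_smul_hasseDeriv, LinearMap.smul_apply, nsmul_eq_mul,
    (CharP.cast_eq_zero_iff R[X] p _).mpr (Nat.dvd_factorial (NeZero.pos p) le_rfl), zero_mul]

theorem eval_one_eq_of_derivative_eq_C {K : Type*} [CommRing K] [IsDomain K] (p : ℕ)
    [Fact p.Prime] [CharP K p] {P : K[X]} {a : K} (hdeg : P.natDegree ≤ p)
    (hP : derivative P = C a) : P.eval 1 = P.coeff 0 + a + P.coeff p := by
  have hp := (Fact.out : p.Prime).two_le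
  have hcoeff : ∀ k, P.coeff (k + 1) * (k + 1) = if k = 0 then a else 0 := fun k => by
    rw [← coeff_derivative, hP, coeff_C]
  have hmid : ∀ k ∈ range p, k ≠ 0 ∧ k ≠ 1 → P.coeff k = 0 := by
    rintro k hk ⟨hk0, hk1⟩
    obtain ⟨k, rfl⟩ := Nat.exists_eq_succ_of_ne_zero hk0
    have hcast : ((k + 1 : ℕ) : K) ≠ 0 := by
      rw [ne_eq, CharP.cast_eq_zero_iff K p]
      exact Nat.not_dvd_of_pos_of_lt k.succ_pos (mem_range.mp hk)
    have hk := hcoeff k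
    rw [if_neg (by omega)] at hk
    push_cast at hcast
    exact (mul_eq_zero.mp hk).resolve_right hcast
  simp only [eval_eq_sum_range' (Nat.lt_succ_of_le hdeg), one_pow, mul_one]
  rw [sum_range_succ,
    sum_eq_add 0 1 zero_ne_one hmid (fun h => (h (mem_range.mpr (by omega))).elim)
      (fun h => (h (mem_range.mpr (by omega))).elim)]
  simpa using hcoeff 0

end Polynomial

namespace Derivation

variable {R A : Type*} [CommRing R] [CommRing A] [Algebra R A]

theorem toLinearMap_mul_lmul (d : Derivation R A A) (f : A) :
    d.toLinearMap * Algebra.lmul R A f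
      = Algebra.lmul R A f * d.toLinearMap + Algebra.lmul R A (d f) := by
  ext g
  simp only [Algebra.coe_lmul_eq_mul, Module.End.mul_apply, LinearMap.mul_apply_apply,
    coeFn_coe, leibniz, smul_eq_mul, LinearMap.add_apply, add_right_inj]
  ring

noncomputable def addLmul (d : Derivation R A A) (c : A) : Module.End R A :=
  d.toLinearMap + Algebra.lmul R A c

theorem addLmul_mul_lmul (d : Derivation R A A) (c f : A) :
    d.addLmul c * Algebra.lmul R A f
      = Algebra.lmul R A f * d.addLmul c + Algebra.lmul R A (d f) := by
  rw [addLmul, add_mul, mul_add, toLinearMap_mul_lmul, ((Commute.all c f).map _).eq]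
  abel

variable {K : Type*} [CommRing K] [Algebra R K] (d : Derivation R K K)

noncomputable def coeffwise : Derivation R K[X] K[X] :=
  PolynomialModule.equivPolynomialSelf.compDer d.mapCoeffs

@[simp]
theorem coeff_coeffwise (q : K[X]) (n : ℕ) : (d.coeffwise q).coeff n = d (q.coeff n) := rfl

@[simp]
theorem coeffwise_monomial (n : ℕ) (a : K) : d.coeffwise (monomial n a) = monomial n (d a) := by
  ext k
  simp [coeff_monomial, apply_ite d]

theorem iterate_coeffwise_monomial (l n : ℕ) (a : K) :
    d.coeffwise^[l] (monomial n a) = monomial n (d^[l] a) := by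
  induction l with
  | zero => rfl
  | succ l ih =>
    rw [Function.iterate_succ_apply', ih, coeffwise_monomial, Function.iterate_succ_apply']

@[simp]
theorem coeffwise_C (a : K) : d.coeffwise (C a) = C (d a) := by
  simpa using d.coeffwise_monomial 0 a

@[simp]
theorem coeffwise_X : d.coeffwise (X : K[X]) = 0 := by
  rw [← monomial_one_one_eq_X, coeffwise_monomial, d.map_one_eq_zero, monomial_zero_right]

theorem commute_coeffwise_lmul_X :
    Commute d.coeffwise.toLinearMap (Algebra.lmul R K[X] X) := by
  rw [Commute, SemiconjBy, toLinearMap_mul_lmul, coeffwise_X, map_zero, add_zero]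

theorem eval_one_coeffwise (q : K[X]) : (d.coeffwise q).eval 1 = d (q.eval 1) := by
  induction q using Polynomial.induction_on' with
  | add q r hq hr => rw [map_add, eval_add, hq, hr, eval_add, map_add]
  | monomial n a => simp

theorem derivative_coeffwise (q : K[X]) :
    derivative (d.coeffwise q) = d.coeffwise (derivative q) := by
  ext n
  simp only [coeff_derivative, coeff_coeffwise, leibniz, map_add, map_natCast, map_one_eq_zero,
    add_zero, smul_eq_mul]
  ring

/-- `∂` acting by left multiplication on `K⟨∂⟩ ≅ K[X]`. -/
noncomputable def leftMulDeriv : Module.End R K[X] :=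
  d.coeffwise.toLinearMap + Algebra.lmul R K[X] X

/-- The operator `∑ aᵢ ∂ⁱ`, encoded as `A = ∑ aᵢ Xⁱ`, acting by left multiplication on
`K⟨∂⟩ ≅ K[X]`. -/
noncomputable def leftMul (A : K[X]) : Module.End R K[X] :=
  A.eval₂ ((Algebra.lmul R K[X]).toRingHom.comp C) d.leftMulDeriv

theorem leftMulDeriv_mul_lmul_C (a : K) :
    d.leftMulDeriv * Algebra.lmul R K[X] (C a)
      = Algebra.lmul R K[X] (C a) * d.leftMulDeriv + Algebra.lmul R K[X] (C (d a)) := by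
  rw [leftMulDeriv, add_mul, mul_add, toLinearMap_mul_lmul, ((Commute.all X (C a)).map _).eq,
    coeffwise_C]
  abel

theorem leftMulDeriv_pow_one (n : ℕ) : (d.leftMulDeriv ^ n) 1 = X ^ n := by
  induction n with
  | zero => rfl
  | succ n ih => rw [pow_succ', Module.End.mul_apply, ih]; simp [leftMulDeriv, pow_succ']

theorem leftMulDeriv_pow_monomial (i j : ℕ) (b : K) :
    (d.leftMulDeriv ^ i) (monomial j b)
      = ∑ l ∈ range (i + 1), monomial (i - l + j) (i.choose l * d^[l] b) := by
  rw [leftMulDeriv, d.commute_coeffwise_lmul_X.add_pow, LinearMap.sum_apply]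
  refine sum_congr rfl fun l _ => ?_
  rw [← map_pow, Module.End.mul_apply, Module.End.mul_apply, Module.End.natCast_apply,
    Algebra.coe_lmul_eq_mul, LinearMap.mul_apply', Module.End.pow_apply, mul_smul_comm,
    X_pow_mul_monomial, smul_monomial, coeFn_coe, iterate_coeffwise_monomial, iterate_map_nsmul,
    nsmul_eq_mul, add_comm j]

theorem leftMul_one : d.leftMul 1 = 1 := eval₂_one _ _

theorem leftMul_monomial (n : ℕ) (a : K) :
    d.leftMul (monomial n a) = Algebra.lmul R K[X] (C a) * d.leftMulDeriv ^ n :=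
  eval₂_monomial _ _

theorem leftMul_C_mul (a : K) (q : K[X]) :
    d.leftMul (C a * q) = Algebra.lmul R K[X] (C a) * d.leftMul q := by
  rw [leftMul, C_mul', eval₂_smul]
  rfl

theorem leftMul_X_add_C (b : K) :
    d.leftMul (X + C b) = Algebra.lmul R K[X] X + d.coeffwise.addLmul (C b) := by
  rw [leftMul, eval₂_add, eval₂_X, eval₂_C, leftMulDeriv, addLmul]
  simp only [RingHom.comp_apply, AlgHom.toRingHom_eq_coe, RingHom.coe_coe]
  abel

theorem leftMul_apply_one (A : K[X]) : d.leftMul A 1 = A := by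
  induction A using Polynomial.induction_on' with
  | add A B hA hB => simp only [leftMul, eval₂_add, LinearMap.add_apply] at hA hB ⊢; rw [hA, hB]
  | monomial n a => simp [leftMul_monomial, leftMulDeriv_pow_one, C_mul_X_pow_eq_monomial]

theorem leftMul_leftMulDeriv (q : K[X]) :
    d.leftMul (d.leftMulDeriv q) = d.leftMulDeriv * d.leftMul q := by
  induction q using Polynomial.induction_on' with
  | add q r hq hr => simp only [map_add, leftMul, eval₂_add] at hq hr ⊢; rw [hq, hr, mul_add]
  | monomial n a =>
    have h : d.leftMulDeriv (monomial n a) = monomial n (d a) + monomial (n + 1) a := by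
      simp [leftMulDeriv, X_mul_monomial]
    rw [h, leftMul, eval₂_add, ← leftMul, ← leftMul, leftMul_monomial, leftMul_monomial,
      leftMul_monomial, ← mul_assoc, leftMulDeriv_mul_lmul_C, pow_succ', add_mul, mul_assoc]
    abel

theorem leftMul_leftMul (A q : K[X]) : d.leftMul (d.leftMul A q) = d.leftMul A * d.leftMul q := by
  induction A using Polynomial.induction_on' with
  | add A B hA hB =>
    simp only [leftMul, eval₂_add, LinearMap.add_apply] at hA hB ⊢
    rw [hA, hB, add_mul]
  | monomial n a =>
    have hpow : ∀ r, d.leftMul ((d.leftMulDeriv ^ n) r) = d.leftMulDeriv ^ n * d.leftMul r := by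
      induction n with
      | zero => simp
      | succ n ih =>
        intro r
        rw [pow_succ', Module.End.mul_apply, leftMul_leftMulDeriv, ih, mul_assoc]
    rw [leftMul_monomial, Module.End.mul_apply, mul_assoc, ← hpow, ← leftMul_C_mul]
    rfl

theorem leftMul_leftMul_pow_apply_one (A : K[X]) (n : ℕ) :
    d.leftMul ((d.leftMul A ^ n) 1) = d.leftMul A ^ n := by
  induction n with
  | zero => exact d.leftMul_one
  | succ n ih => rw [pow_succ', Module.End.mul_apply, leftMul_leftMul, ih]

theorem coeffwise_addLmul_C_pow_apply_C (b a : K) (n : ℕ) :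
    (d.coeffwise.addLmul (C b) ^ n) (C a) = C ((d.addLmul b ^ n) a) := by
  induction n with
  | zero => rfl
  | succ n ih =>
    rw [pow_succ', Module.End.mul_apply, ih, pow_succ', Module.End.mul_apply]
    simp [addLmul, Algebra.coe_lmul_eq_mul]

theorem leftMul_X_add_C_pow_char_apply_one (p : ℕ) [Fact p.Prime] [CharP K p] (b : K) :
    (d.leftMul (X + C b) ^ p) 1 = X ^ p + C ((d.addLmul b ^ p) 1) := by
  have : CharP (Module.End R K[X]) p :=
    charP_of_injective_ringHom (f := (Algebra.lmul R K[X]).toRingHom) Algebra.lmul_injective p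
  have hcomm : Commute (Algebra.lmul R K[X] X) (d.coeffwise.addLmul (C b)) := by
    rw [addLmul]
    exact d.commute_coeffwise_lmul_X.symm.add_right ((Commute.all X (C b)).map _)
  rw [leftMul_X_add_C, add_pow_char_of_commute _ hcomm, LinearMap.add_apply, ← map_one C,
    coeffwise_addLmul_C_pow_apply_C, ← map_pow, Algebra.coe_lmul_eq_mul, LinearMap.mul_apply',
    map_one, mul_one]

-- From here on `K[X]` stands for `K[t]`, and `d.coeffwise.addLmul (C b * X)` is `∂ + t b`.

theorem eval_one_addLmul_C_mul_X_pow (b : K) (n : ℕ) (q : K[X]) :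
    ((d.coeffwise.addLmul (C b * X) ^ n) q).eval 1 = (d.addLmul b ^ n) (q.eval 1) := by
  induction n generalizing q with
  | zero => rfl
  | succ n ih =>
    rw [pow_succ, Module.End.mul_apply, ih, pow_succ, Module.End.mul_apply]
    simp [addLmul, Algebra.coe_lmul_eq_mul, eval_one_coeffwise]

theorem coeff_zero_addLmul_C_mul_X (b : K) (q : K[X]) :
    (d.coeffwise.addLmul (C b * X) q).coeff 0 = d (q.coeff 0) := by
  simp [addLmul, Algebra.coe_lmul_eq_mul, mul_assoc]

theorem coeff_succ_addLmul_C_mul_X (b : K) (q : K[X]) (k : ℕ) :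
    (d.coeffwise.addLmul (C b * X) q).coeff (k + 1) = d (q.coeff (k + 1)) + b * q.coeff k := by
  simp [addLmul, Algebra.coe_lmul_eq_mul, mul_assoc]

theorem coeff_addLmul_C_mul_X_pow_one_of_lt (b : K) {n k : ℕ} (h : n < k) :
    ((d.coeffwise.addLmul (C b * X) ^ n) 1).coeff k = 0 := by
  induction n generalizing k with
  | zero => simp [coeff_one, h.ne']
  | succ n ih =>
    obtain ⟨k, rfl⟩ := Nat.exists_eq_add_of_lt h
    rw [pow_succ', Module.End.mul_apply, show n + 1 + k + 1 = (n + 1 + k) + 1 by omega,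
      coeff_succ_addLmul_C_mul_X, ih (by omega), ih (by omega), map_zero, mul_zero, add_zero]

theorem coeff_addLmul_C_mul_X_pow_one_self (b : K) (n : ℕ) :
    ((d.coeffwise.addLmul (C b * X) ^ n) 1).coeff n = b ^ n := by
  induction n with
  | zero => simp
  | succ n ih =>
    rw [pow_succ', Module.End.mul_apply, coeff_succ_addLmul_C_mul_X,
      coeff_addLmul_C_mul_X_pow_one_of_lt _ _ n.lt_succ_self, ih, map_zero, zero_add, pow_succ']

theorem coeff_zero_addLmul_C_mul_X_pow_succ_one (b : K) (n : ℕ) :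
    ((d.coeffwise.addLmul (C b * X) ^ (n + 1)) 1).coeff 0 = 0 := by
  induction n with
  | zero => simp [coeff_zero_addLmul_C_mul_X]
  | succ n ih => rw [pow_succ', Module.End.mul_apply, coeff_zero_addLmul_C_mul_X, ih, map_zero]

theorem derivative_addLmul_C_mul_X_pow_succ_one (b : K) (n : ℕ) :
    derivative ((d.coeffwise.addLmul (C b * X) ^ (n + 1)) 1)
      = ∑ j ∈ range (n + 1), (n + 1).choose (j + 1) •
          (C (d^[j] b) * (d.coeffwise.addLmul (C b * X) ^ (n - j)) 1) := by
  set δ : Module.End R K[X] :=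
    ((derivative' : Derivation K K[X] K[X]).restrictScalars R).toLinearMap
  have hδ : δ * d.coeffwise.addLmul (C b * X)
      = d.coeffwise.addLmul (C b * X) * δ + Algebra.lmul R K[X] (C b) := by
    have hcomm : δ * d.coeffwise.toLinearMap = d.coeffwise.toLinearMap * δ :=
      LinearMap.ext d.derivative_coeffwise
    rw [addLmul, mul_add, add_mul, hcomm, toLinearMap_mul_lmul]
    simp [δ, add_assoc]
  have key := mul_pow_succ_eq_pow_succ_mul_add_sum δ (d.coeffwise.addLmul (C b * X))
    (fun a => Algebra.lmul R K[X] (C a)) d b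
    (fun a => by rw [addLmul_mul_lmul, coeffwise_C]) hδ n
  simpa [δ, Algebra.coe_lmul_eq_mul] using LinearMap.congr_fun key 1

theorem addLmul_pow_char_apply_one [IsDomain K] (p : ℕ) [hp : Fact p.Prime] [CharP K p] (b : K) :
    (d.addLmul b ^ p) 1 = d^[p - 1] b + b ^ p := by
  obtain ⟨n, rfl⟩ : ∃ n, p = n + 1 := ⟨p - 1, (Nat.succ_pred_eq_of_pos hp.out.pos).symm⟩
  set v := (d.coeffwise.addLmul (C b * X) ^ (n + 1)) 1
  have hderiv : derivative v = C (d^[n] b) := by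
    rw [derivative_addLmul_C_mul_X_pow_succ_one, sum_eq_single_of_mem n (self_mem_range_succ n)]
    · simp
    · intro j hj hjn
      have hdvd := hp.out.dvd_choose_self (Nat.succ_ne_zero j)
        (by have := mem_range.mp hj; omega)
      rw [nsmul_eq_mul, (CharP.cast_eq_zero_iff K[X] (n + 1) _).mpr hdvd, zero_mul]
  have hdeg : v.natDegree ≤ n + 1 :=
    natDegree_le_iff_coeff_eq_zero.mpr fun k hk => coeff_addLmul_C_mul_X_pow_one_of_lt d b hk
  calc (d.addLmul b ^ (n + 1)) 1 = v.eval 1 := by rw [eval_one_addLmul_C_mul_X_pow, eval_one]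
    _ = v.coeff 0 + d^[n] b + v.coeff (n + 1) :=
      eval_one_eq_of_derivative_eq_C (n + 1) hdeg hderiv
    _ = d^[n + 1 - 1] b + b ^ (n + 1) := by
      rw [coeff_zero_addLmul_C_mul_X_pow_succ_one, coeff_addLmul_C_mul_X_pow_one_self, zero_add,
        Nat.add_sub_cancel]

end Derivation

namespace RatFunc

variable {F : Type*} [Field F]

local notation "φ" => algebraMap F[X] (RatFunc F)

theorem rderiv_div_algebraMap {a c : F[X]} (hc : c ≠ 0) :
    rderiv (φ a / φ c) = φ (derivative a * c - a * derivative c) / φ (c ^ 2) := by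
  set f := φ a / φ c
  have hcross : f.num * c = a * f.denom := by
    apply algebraMap_injective F
    rw [map_mul, map_mul, ← div_eq_div_iff (algebraMap_ne_zero f.denom_ne_zero)
      (algebraMap_ne_zero hc), num_div_denom]
  have hcross' := congrArg derivative hcross
  simp only [derivative_mul] at hcross'
  rw [rderiv, div_eq_div_iff (algebraMap_ne_zero (pow_ne_zero 2 f.denom_ne_zero))
    (algebraMap_ne_zero (pow_ne_zero 2 hc)), ← map_mul, ← map_mul]
  congr 1
  linear_combination (-(derivative c * f.denom + c * derivative f.denom)) * hcross
    + (c * f.denom) * hcross'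

theorem exists_eq_div_algebraMap (f : RatFunc F) : ∃ a c : F[X], c ≠ 0 ∧ f = φ a / φ c :=
  ⟨f.num, f.denom, f.denom_ne_zero, f.num_div_denom.symm⟩

theorem rderiv_algebraMap (a : F[X]) : rderiv (φ a) = φ (derivative a) := by
  simpa using rderiv_div_algebraMap (a := a) one_ne_zero

theorem rderiv_add (f g : RatFunc F) : rderiv (f + g) = rderiv f + rderiv g := by
  obtain ⟨a, c, hc, rfl⟩ := exists_eq_div_algebraMap f
  obtain ⟨b, e, he, rfl⟩ := exists_eq_div_algebraMap g
  have hc' := algebraMap_ne_zero hc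
  have he' := algebraMap_ne_zero he
  rw [div_add_div _ _ hc' he', ← map_mul, ← map_mul, ← map_mul, ← map_add,
    rderiv_div_algebraMap (mul_ne_zero hc he), rderiv_div_algebraMap hc, rderiv_div_algebraMap he]
  simp only [map_sub, map_add, map_mul, map_pow, derivative_mul]
  field_simp
  ring

theorem rderiv_mul (f g : RatFunc F) : rderiv (f * g) = f * rderiv g + g * rderiv f := by
  obtain ⟨a, c, hc, rfl⟩ := exists_eq_div_algebraMap f
  obtain ⟨b, e, he, rfl⟩ := exists_eq_div_algebraMap g
  have hc' := algebraMap_ne_zero hc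
  have he' := algebraMap_ne_zero he
  rw [div_mul_div_comm, ← map_mul, ← map_mul,
    rderiv_div_algebraMap (mul_ne_zero hc he), rderiv_div_algebraMap hc, rderiv_div_algebraMap he]
  simp only [map_sub, map_add, map_mul, map_pow, derivative_mul]
  field_simp
  ring

variable (F) in
noncomputable def derivation : Derivation F (RatFunc F) (RatFunc F) :=
  Derivation.mk'
    { toFun := rderiv
      map_add' := rderiv_add
      map_smul' := fun c f => by
        rw [Algebra.smul_def, rderiv_mul, algebraMap_eq_C, ← algebraMap_C, rderiv_algebraMap,
          derivative_C, map_zero, mul_zero, add_zero, algebraMap_C, ← algebraMap_eq_C,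
          RingHom.id_apply, Algebra.smul_def] }
    rderiv_mul

@[simp]
theorem coe_derivation : ⇑(derivation F) = rderiv := rfl

theorem iterate_derivation_div_algebraMap {a c : F[X]} (hc : c ≠ 0) (hc' : derivative c = 0)
    (n : ℕ) : (derivation F)^[n] (φ a / φ c) = φ (derivative^[n] a) / φ c := by
  induction n with
  | zero => rfl
  | succ n ih =>
    rw [Function.iterate_succ_apply', ih, coe_derivation, rderiv_div_algebraMap hc, hc', mul_zero,
      sub_zero, map_mul, map_pow, pow_two, mul_div_mul_right _ _ (algebraMap_ne_zero hc),
      Function.iterate_succ_apply']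

theorem iterate_derivation_char (p : ℕ) [NeZero p] [CharP F p] (f : RatFunc F) :
    (derivation F)^[p] f = 0 := by
  have hden : f.denom ^ p ≠ 0 := pow_ne_zero p f.denom_ne_zero
  have hden' : derivative (f.denom ^ p) = 0 := by
    rw [derivative_pow, C_eq_natCast, CharP.cast_eq_zero, zero_mul, zero_mul]
  have hf : f = φ (f.num * f.denom ^ (p - 1)) / φ (f.denom ^ p) := by
    obtain ⟨k, rfl⟩ : ∃ k, p = k + 1 := ⟨p - 1, (Nat.sub_add_cancel (NeZero.pos p)).symm⟩
    rw [Nat.add_sub_cancel, pow_succ', map_mul, map_mul,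
      mul_div_mul_right _ _ (algebraMap_ne_zero (pow_ne_zero k f.denom_ne_zero)), num_div_denom]
  rw [hf, iterate_derivation_div_algebraMap hden hden', iterate_derivative_eq_zero_of_charP,
    map_zero, zero_div]

end RatFunc

section OreRing

variable {F : Type*} [Field F]

theorem omul_eq_leftMul (A B : (RatFunc F)[X]) : omul A B = (RatFunc.derivation F).leftMul A B := by
  have hB : ∀ i a, Algebra.lmul F _ (C a) (((RatFunc.derivation F).leftMulDeriv ^ i) B)
      = B.sum fun j b => ∑ l ∈ range (i + 1),
          monomial (i - l + j) ((i.choose l : RatFunc F) * a * rderiv^[l] b) := by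
    intro i a
    conv_lhs => rw [← B.sum_monomial_eq]
    rw [Polynomial.sum_def, Polynomial.sum_def, map_sum, map_sum]
    refine sum_congr rfl fun j _ => ?_
    rw [Derivation.leftMulDeriv_pow_monomial, map_sum]
    refine sum_congr rfl fun l _ => ?_
    rw [Algebra.coe_lmul_eq_mul, LinearMap.mul_apply', C_mul_monomial, RatFunc.coe_derivation,
      mul_left_comm, ← mul_assoc]
  rw [omul, Derivation.leftMul, eval₂_eq_sum, Polynomial.sum_def, Polynomial.sum_def,
    LinearMap.sum_apply]
  refine sum_congr rfl fun i _ => ?_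
  rw [← hB]
  rfl

theorem opow_eq_leftMul_pow_apply_one (A : (RatFunc F)[X]) (n : ℕ) :
    opow A n = ((RatFunc.derivation F).leftMul A ^ n) 1 := by
  induction n with
  | zero => rfl
  | succ n ih =>
    rw [opow, omul_eq_leftMul, ih, Derivation.leftMul_leftMul_pow_apply_one, pow_succ,
      Module.End.mul_apply, Derivation.leftMul_apply_one]

theorem opow_X_add_C_char (p : ℕ) [Fact p.Prime] [CharP F p] (b : RatFunc F) :
    opow (X + C b) p = X ^ p + C (rderiv^[p - 1] b + b ^ p) := by
  rw [opow_eq_leftMul_pow_apply_one, Derivation.leftMul_X_add_C_pow_char_apply_one,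
    Derivation.addLmul_pow_char_apply_one, RatFunc.coe_derivation]

theorem rderiv_iterate_pred_add_pow_char (p : ℕ) [NeZero p] [CharP F p] (b : RatFunc F) :
    rderiv (rderiv^[p - 1] b + b ^ p) = 0 := by
  rw [← RatFunc.coe_derivation, map_add, ← Function.iterate_succ_apply' (RatFunc.derivation F),
    Nat.succ_eq_add_one, Nat.sub_add_cancel (NeZero.pos p), RatFunc.iterate_derivation_char,
    Derivation.leibniz_pow, zero_add, nsmul_eq_mul, CharP.cast_eq_zero, zero_mul]

end OreRing

/-- For a prime `p` and `b(x) ∈ 𝔽_p(x)`, in the Ore ring `𝔽_p(x)⟨∂⟩` one has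
`(∂ + b(x))^p = ∂^p + b_p(x)` with `b_p = b^{(p−1)} + b^p`; moreover `b_p` lies in
`𝔽_p(xᵖ)`, i.e. its derivative vanishes. -/
theorem pow_p_of_order_one_operator (p : ℕ) [Fact p.Prime] (b : RatFunc (ZMod p)) :
    opow (Polynomial.X + Polynomial.C b) p =
        Polynomial.X ^ p + Polynomial.C (rderiv^[p - 1] b + b ^ p) ∧
      rderiv (rderiv^[p - 1] b + b ^ p) = 0 :=
  ⟨opow_X_add_C_char p b, rderiv_iterate_pred_add_pow_char p b⟩
end

section
/- The perimeter generating series p(x) = 2π·Σ_{k≥0} a_{2k} x^{2k} with a_{2k} = binom(2k,k)²/((1−2k)·16^k) satisfies the differential equation (x − x³)·p''(x) + (1 − x²)·p'(x) + x·p(x) = 0; equivalently, the coefficients satisfy (k−1)(k+1)·a_k = (k+2)²·a_{k+2} with a_0 = 2π, a_1 = 0 and a_{2k+1} = 0 for all k. -/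
/-!
The coefficient of `x^(k+1)` in `(x - x³)p'' + (1 - x²)p' + x p` is
`(k+2)² a_{k+2} - (k-1)(k+1) a_k`, and its constant coefficient is `a₁`; this gives the
equivalence. The recurrence does not mix parities: the odd chain starts at `a₁ = 0`, and along
the even chain `a_{2k+2} / a_{2k} = (2k-1)(2k+1)/(2k+2)²`, which is also the ratio of
consecutive terms of `binom(2k,k)² / ((1-2k) 16^k)` because `(k+1) C_{k+1} = 2(2k+1) C_k`
for the central binomial coefficients `C_k`.
-/

open PowerSeries

namespace PowerSeries

variable {R : Type*} [CommRing R]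

noncomputable def ellipseOperator (p : R⟦X⟧) : R⟦X⟧ :=
  (X - X ^ 3) * d⁄dX R (d⁄dX R p) + (1 - X ^ 2) * d⁄dX R p + X * p

lemma coeff_zero_ellipseOperator (p : R⟦X⟧) : coeff 0 (ellipseOperator p) = coeff 1 p := by
  simpa [ellipseOperator, sub_mul] using coeff_derivative p 0

lemma coeff_succ_ellipseOperator (p : R⟦X⟧) (k : ℕ) :
    coeff (k + 1) (ellipseOperator p) =
      ((k : R) + 2) ^ 2 * coeff (k + 2) p - ((k : R) - 1) * ((k : R) + 1) * coeff k p := by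
  rcases k with _ | _ | k <;>
    simp [ellipseOperator, sub_mul, coeff_derivative, coeff_X_pow_mul', coeff_succ_X_mul] <;> ring

lemma ellipseOperator_eq_zero_iff (p : R⟦X⟧) :
    ellipseOperator p = 0 ↔ coeff 1 p = 0 ∧
      ∀ k : ℕ, ((k : R) - 1) * ((k : R) + 1) * coeff k p = ((k : R) + 2) ^ 2 * coeff (k + 2) p := by
  rw [PowerSeries.ext_iff, ← Nat.and_forall_add_one]
  simp only [map_zero, coeff_zero_ellipseOperator, coeff_succ_ellipseOperator, sub_eq_zero]
  exact and_congr_right' (forall_congr' fun _ => eq_comm)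

variable {K : Type*} [Field K] [CharZero K]

lemma apply_odd_eq_zero_of_recurrence {a : ℕ → K} (ha1 : a 1 = 0)
    (hrec : ∀ k : ℕ, ((k : K) - 1) * ((k : K) + 1) * a k = ((k : K) + 2) ^ 2 * a (k + 2))
    (k : ℕ) : a (2 * k + 1) = 0 := by
  induction k with
  | zero => exact ha1
  | succ k ih =>
    have h := hrec (2 * k + 1)
    rw [ih, mul_zero, eq_comm, mul_eq_zero] at h
    exact h.resolve_left (pow_ne_zero 2 (by exact_mod_cast (2 * k + 1 + 2).succ_ne_zero))

lemma apply_two_mul_eq_of_recurrence {a : ℕ → K}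
    (hrec : ∀ k : ℕ, ((k : K) - 1) * ((k : K) + 1) * a k = ((k : K) + 2) ^ 2 * a (k + 2))
    (k : ℕ) : a (2 * k) = a 0 * (k.centralBinom : K) ^ 2 / ((1 - 2 * (k : K)) * 16 ^ k) := by
  induction k with
  | zero => simp
  | succ k ih =>
    have h := hrec (2 * k)
    push_cast at h
    have hk : (k : K) + 1 ≠ 0 := by exact_mod_cast k.succ_ne_zero
    have h1 : 1 - 2 * (k : K) ≠ 0 := by exact_mod_cast (by omega : (1 - 2 * k : ℤ) ≠ 0)
    have h2 : 1 - 2 * ((k : K) + 1) ≠ 0 := by exact_mod_cast (by omega : (1 - 2 * (k + 1) : ℤ) ≠ 0)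
    have hstep : a (2 * k + 2) = (2 * k - 1) * (2 * k + 1) * a (2 * k) / (2 * k + 2) ^ 2 := by
      rw [eq_div_iff (pow_ne_zero 2 (by exact_mod_cast (2 * k + 1).succ_ne_zero)), h]; ring
    have hC : ((k + 1).centralBinom : K) = 2 * (2 * k + 1) * k.centralBinom / (k + 1) := by
      rw [eq_div_iff hk]
      exact_mod_cast (mul_comm _ _).trans (Nat.succ_mul_centralBinom_succ k)
    rw [show 2 * (k + 1) = 2 * k + 2 by ring, hstep, ih, hC]
    push_cast
    field_simp
    ring

end PowerSeries

/-- **Euler's differential equation for the perimeter of the ellipse.**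
For a formal power series `p(x) = ∑ a_k x^k ∈ ℝ⟦x⟧` with `a₀ = 2π` and `a₁ = 0`,
the differential equation `(x − x³)p'' + (1 − x²)p' + x·p = 0` is equivalent to the
recurrence `(k−1)(k+1)a_k = (k+2)²a_{k+2}` for all `k ≥ 0`; and under this equation the
coefficients are `a_{2k} = 2π·binom(2k,k)²/((1−2k)16^k)` and `a_{2k+1} = 0`. -/
theorem ellipse_perimeter_ode (a : ℕ → ℝ) (ha0 : a 0 = 2 * Real.pi) (ha1 : a 1 = 0) :
    ((X - X ^ 3) * derivativeFun (derivativeFun (PowerSeries.mk a)) +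
          (1 - X ^ 2) * derivativeFun (PowerSeries.mk a) + X * PowerSeries.mk a = 0 ↔
        ∀ k : ℕ, ((k : ℝ) - 1) * ((k : ℝ) + 1) * a k = ((k : ℝ) + 2) ^ 2 * a (k + 2)) ∧
      ((X - X ^ 3) * derivativeFun (derivativeFun (PowerSeries.mk a)) +
          (1 - X ^ 2) * derivativeFun (PowerSeries.mk a) + X * PowerSeries.mk a = 0 →
        (∀ k : ℕ, a (2 * k) =
            2 * Real.pi * ((2 * k).choose k : ℝ) ^ 2 / ((1 - 2 * (k : ℝ)) * 16 ^ k)) ∧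
          ∀ k : ℕ, a (2 * k + 1) = 0) := by
  change (ellipseOperator (mk a) = 0 ↔ _) ∧ (ellipseOperator (mk a) = 0 → _)
  have hiff : ellipseOperator (mk a) = 0 ↔
      ∀ k : ℕ, ((k : ℝ) - 1) * ((k : ℝ) + 1) * a k = ((k : ℝ) + 2) ^ 2 * a (k + 2) := by
    simpa [ha1] using ellipseOperator_eq_zero_iff (mk a)
  refine ⟨hiff, fun h => ⟨fun k => ?_, apply_odd_eq_zero_of_recurrence ha1 (hiff.1 h)⟩⟩
  rw [apply_two_mul_eq_of_recurrence (hiff.1 h), ha0, Nat.centralBinom_eq_two_mul_choose]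
end

section
/- For the Legendre-type equation (4x² − 4x)·y'' + (8x − 4)·y' + y = 0, a power series solution y = Σ b_k x^k with b_0 = 2π exists and its coefficients satisfy (2k+1)²·b_k = 4(k+1)²·b_{k+1}, so b_k = 2π·binom(2k,k)²/16^k for all k ≥ 0. -/
/-!
Comparing coefficients of `xⁿ`, the operator `(4x² − 4x)y'' + (8x − 4)y' + y` sends
`∑ b_k x^k` to `∑ ((2n+1)² b_n − 4(n+1)² b_{n+1}) xⁿ`, so the equation is exactly the
recurrence. The closed form satisfies it because of
`(k+1)·binom(2k+2, k+1) = 2(2k+1)·binom(2k, k)`.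
-/

open PowerSeries

set_option linter.deprecated false

namespace PowerSeries

variable {R : Type*} [CommRing R]

theorem derivativeFun_eq_derivative (f : R⟦X⟧) : derivativeFun f = d⁄dX R f := rfl

theorem coeff_X_mul_derivative (f : R⟦X⟧) (n : ℕ) :
    coeff n (X * d⁄dX R f) = n * coeff n f := by
  cases n with
  | zero => simp
  | succ n => rw [coeff_succ_X_mul, coeff_derivative, mul_comm]; push_cast; rfl

theorem coeff_X_sq_mul_derivative_derivative (f : R⟦X⟧) (n : ℕ) :
    coeff n (X ^ 2 * d⁄dX R (d⁄dX R f)) = n * (n - 1) * coeff n f := by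
  match n with
  | 0 => simp
  | 1 => simp [coeff_X_pow_mul']
  | n + 2 =>
    rw [coeff_X_pow_mul, coeff_derivative, coeff_derivative]
    push_cast; ring

theorem coeff_legendreOperator (f : R⟦X⟧) (n : ℕ) :
    coeff n ((4 * X ^ 2 - 4 * X) * d⁄dX R (d⁄dX R f) + (8 * X - 4) * d⁄dX R f + f) =
      (2 * n + 1) ^ 2 * coeff n f - 4 * (n + 1) ^ 2 * coeff (n + 1) f := by
  have hX : coeff n (X * d⁄dX R (d⁄dX R f)) = n * ((n + 1) * coeff (n + 1) f) := by
    rw [coeff_X_mul_derivative, coeff_derivative, mul_comm (coeff _ f)]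
  have expand : (4 * X ^ 2 - 4 * X) * d⁄dX R (d⁄dX R f) + (8 * X - 4) * d⁄dX R f + f =
      C 4 * (X ^ 2 * d⁄dX R (d⁄dX R f)) - C 4 * (X * d⁄dX R (d⁄dX R f)) +
        C 8 * (X * d⁄dX R f) - C 4 * d⁄dX R f + f := by
    simp only [map_ofNat]; ring
  rw [expand]
  simp only [map_add, map_sub, coeff_C_mul, coeff_X_sq_mul_derivative_derivative, hX,
    coeff_X_mul_derivative, coeff_derivative]
  ring

theorem legendre_ode_mk_iff (b : ℕ → R) :
    (4 * X ^ 2 - 4 * X) * derivativeFun (derivativeFun (mk b)) +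
        (8 * X - 4) * derivativeFun (mk b) + mk b = 0 ↔
      ∀ k : ℕ, (2 * (k : R) + 1) ^ 2 * b k = 4 * ((k : R) + 1) ^ 2 * b (k + 1) := by
  simp only [derivativeFun_eq_derivative, PowerSeries.ext_iff, coeff_legendreOperator, coeff_mk,
    map_zero, sub_eq_zero]

end PowerSeries

theorem centralBinom_sq_div_sixteen_pow_recurrence {K : Type*} [Field K] [CharZero K] (c : K) (k : ℕ) :
    (2 * (k : K) + 1) ^ 2 * (c * (k.centralBinom : K) ^ 2 / 16 ^ k) =
      4 * ((k : K) + 1) ^ 2 * (c * ((k + 1).centralBinom : K) ^ 2 / 16 ^ (k + 1)) := by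
  have h : ((k : K) + 1) * ((k + 1).centralBinom : K) = 2 * (2 * k + 1) * k.centralBinom := by
    exact_mod_cast Nat.succ_mul_centralBinom_succ k
  calc (2 * (k : K) + 1) ^ 2 * (c * (k.centralBinom : K) ^ 2 / 16 ^ k)
      = c * (2 * (2 * k + 1) * k.centralBinom) ^ 2 / (4 * 16 ^ k) := by ring
    _ = 4 * ((k : K) + 1) ^ 2 * (c * ((k + 1).centralBinom : K) ^ 2 / 16 ^ (k + 1)) := by
      rw [← h]; ring

/-- **Legendre's differential equation.** There is a power series solution
`y = ∑ b_k x^k ∈ ℝ⟦x⟧` of `(4x² − 4x)y'' + (8x − 4)y' + y = 0` with `b₀ = 2π`; its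
coefficients satisfy the recurrence `(2k+1)²·b_k = 4(k+1)²·b_{k+1}`, and hence have the
closed form `b_k = 2π·binom(2k,k)²/16^k` for all `k ≥ 0`. -/
theorem legendre_ode_solution :
    ∃ b : ℕ → ℝ, b 0 = 2 * Real.pi ∧
      (4 * X ^ 2 - 4 * X) * derivativeFun (derivativeFun (PowerSeries.mk b)) +
          (8 * X - 4) * derivativeFun (PowerSeries.mk b) + PowerSeries.mk b = 0 ∧
      (∀ k : ℕ, (2 * (k : ℝ) + 1) ^ 2 * b k = 4 * ((k : ℝ) + 1) ^ 2 * b (k + 1)) ∧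
      ∀ k : ℕ, b k = 2 * Real.pi * ((2 * k).choose k : ℝ) ^ 2 / 16 ^ k := by
  have hrec := centralBinom_sq_div_sixteen_pow_recurrence (2 * Real.pi)
  simp only [Nat.centralBinom] at hrec
  exact ⟨_, by simp, (PowerSeries.legendre_ode_mk_iff _).2 hrec, hrec, fun _ => rfl⟩
end

section
/- Let p be a prime and f(x) ∈ 𝔽_p(x) ⊆ 𝔽_p((x)) a rational function expanded as a Laurent series f = Σ_n u_n x^n. Then the operator ∂ − b(x) with b = f (assuming b has a power series expansion Σ_{n≥0} u_n x^n) has vanishing p-curvature b^{(p−1)} + b^p = 0 if and only if u_n ≡ u_{(n+1)p−1} (mod p) for all n ≥ 0. -/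
open Polynomial

/-! By Wilson's theorem the `(p-1)`-st derivative acts on coefficients as
`coeff m (b^{(p-1)}) = (m+1)⋯(m+p-1) · u_{m+p-1}`, which is `-u_{m+p-1}` if `p ∣ m` and `0`
otherwise, while over `𝔽_p` the Frobenius gives `b^p = ∑ u_n x^{np}`. Comparing coefficients
of `x^{np}` yields the congruences. Both identities are computed on power series, to which
`rderiv` is transported through the embedding `𝔽_p(x) ↪ 𝔽_p((x))`. -/

open PowerSeries
open scoped LaurentSeries RatFunc

section RatFuncToPowerSeries

variable {F : Type*} [Field F]

theorem RatFunc.coe_algebraMap_polynomial (P : F[X]) :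
    (algebraMap F[X] (RatFunc F) P : F⸨X⸩) = HahnSeries.ofPowerSeries ℤ F P := by
  rw [← IsScalarTower.algebraMap_apply]
  exact Polynomial.algebraMap_hahnSeries_apply ℤ P

theorem RatFunc.coe_num_eq_mul_coe_denom {f : RatFunc F} {g : F⟦X⟧}
    (h : (f : F⸨X⸩) = HahnSeries.ofPowerSeries ℤ F g) :
    (f.num : F⟦X⟧) = g * f.denom := by
  apply HahnSeries.ofPowerSeries_injective (Γ := ℤ)
  have hf : f * algebraMap F[X] (RatFunc F) f.denom = algebraMap F[X] (RatFunc F) f.num :=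
    (eq_div_iff (RatFunc.algebraMap_ne_zero f.denom_ne_zero)).mp f.num_div_denom.symm
  rw [map_mul, ← h, ← RatFunc.coe_algebraMap_polynomial, ← RatFunc.coe_algebraMap_polynomial,
    ← map_mul, hf]

theorem coe_rderiv {f : RatFunc F} {g : F⟦X⟧}
    (h : (f : F⸨X⸩) = HahnSeries.ofPowerSeries ℤ F g) :
    (rderiv f : F⸨X⸩) = HahnSeries.ofPowerSeries ℤ F (d⁄dX F g) := by
  have hnum := RatFunc.coe_num_eq_mul_coe_denom h
  have hnum' : (Polynomial.derivative f.num : F⟦X⟧) =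
      d⁄dX F g * f.denom + g * Polynomial.derivative f.denom := by
    rw [← derivative_coe, ← derivative_coe, hnum, Derivation.leibniz, smul_eq_mul, smul_eq_mul]
    ring
  have hquot : ((Polynomial.derivative f.num * f.denom - f.num * Polynomial.derivative f.denom :
      F[X]) : F⟦X⟧) = d⁄dX F g * (f.denom ^ 2 : F[X]) := by
    push_cast [Polynomial.coe_mul, Polynomial.coe_pow, Polynomial.coe_sub]
    rw [hnum, hnum']
    ring
  have hdenom : HahnSeries.ofPowerSeries ℤ F ((f.denom ^ 2 : F[X]) : F⟦X⟧) ≠ 0 := by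
    rw [← RatFunc.coe_algebraMap_polynomial]
    exact (_root_.map_ne_zero _).2 (RatFunc.algebraMap_ne_zero (pow_ne_zero 2 f.denom_ne_zero))
  rw [rderiv, map_div₀, RatFunc.coe_algebraMap_polynomial, RatFunc.coe_algebraMap_polynomial,
    hquot, map_mul, mul_div_cancel_right₀ _ hdenom]

theorem coe_rderiv_iterate (k : ℕ) {f : RatFunc F} {g : F⟦X⟧}
    (h : (f : F⸨X⸩) = HahnSeries.ofPowerSeries ℤ F g) :
    (rderiv^[k] f : F⸨X⸩) = HahnSeries.ofPowerSeries ℤ F ((d⁄dX F)^[k] g) := by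
  induction k generalizing f g with
  | zero => exact h
  | succ k ih => exact ih (coe_rderiv h)

theorem rderiv_iterate_add_pow_eq_zero_iff (k n : ℕ) {f : RatFunc F} {g : F⟦X⟧}
    (h : (f : F⸨X⸩) = HahnSeries.ofPowerSeries ℤ F g) :
    rderiv^[k] f + f ^ n = 0 ↔ (d⁄dX F)^[k] g + g ^ n = 0 := by
  rw [← _root_.map_eq_zero (algebraMap (RatFunc F) F⸨X⸩), map_add, map_pow,
    coe_rderiv_iterate k h, h, ← map_pow, ← map_add,
    map_eq_zero_iff _ HahnSeries.ofPowerSeries_injective]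

end RatFuncToPowerSeries

theorem ZMod.natCast_ascFactorial_pred (p : ℕ) [hp : Fact p.Prime] (k : ℕ) :
    ((k + 1).ascFactorial (p - 1) : ZMod p) = if p ∣ k then -1 else 0 := by
  have hmod : ((k + 1).ascFactorial (p - 1) : ZMod p) =
      ((k % p + 1).ascFactorial (p - 1) : ZMod p) := by
    rw [Nat.cast_ascFactorial, Nat.cast_ascFactorial, Nat.cast_succ, Nat.cast_succ,
      ZMod.natCast_mod]
  rw [hmod]
  split_ifs with hk
  · rw [Nat.mod_eq_zero_of_dvd hk, zero_add, Nat.one_ascFactorial, ZMod.wilsons_lemma]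
  · have hr : 0 < k % p := Nat.pos_of_ne_zero fun h => hk (Nat.dvd_of_mod_eq_zero h)
    have hrp : k % p < p := Nat.mod_lt k hp.out.pos
    -- for `0 < r < p`, the product `(r + 1) ⋯ (r + p - 1)` has the factor `p`
    have hdvd : p ∣ (k % p).factorial * (k % p + 1).ascFactorial (p - 1) := by
      rw [Nat.factorial_mul_ascFactorial]
      exact Nat.dvd_factorial hp.out.pos (by omega)
    rw [ZMod.natCast_eq_zero_iff]
    exact (hp.out.dvd_mul.mp hdvd).resolve_left (by rw [hp.out.dvd_factorial]; omega)

theorem PowerSeries.pow_char_eq_expand (p : ℕ) [hp : Fact p.Prime] (g : (ZMod p)⟦X⟧) :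
    g ^ p = expand p hp.out.ne_zero g := by
  rw [← MvPowerSeries.map_frobenius_expand p hp.out.ne_zero, ZMod.frobenius_zmod,
    MvPowerSeries.map_id]
  rfl

theorem PowerSeries.coeff_iterate_derivative_add_pow_char (p : ℕ) [Fact p.Prime]
    (g : (ZMod p)⟦X⟧) (m : ℕ) :
    coeff m ((d⁄dX (ZMod p))^[p - 1] g + g ^ p) =
      if p ∣ m then coeff (m / p) g - coeff (m + (p - 1)) g else 0 := by
  rw [map_add, coeff_iterate_derivative, ZMod.natCast_ascFactorial_pred, pow_char_eq_expand,
    coeff_expand]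
  split_ifs <;> ring

theorem PowerSeries.iterate_derivative_add_pow_char_eq_zero_iff (p : ℕ) [hp : Fact p.Prime]
    (g : (ZMod p)⟦X⟧) :
    (d⁄dX (ZMod p))^[p - 1] g + g ^ p = 0 ↔ ∀ n, coeff n g = coeff ((n + 1) * p - 1) g := by
  have hshift : ∀ n, p * n + (p - 1) = (n + 1) * p - 1 := fun n => by
    have := hp.out.pos
    rw [add_mul, one_mul, mul_comm]
    omega
  rw [PowerSeries.ext_iff]
  simp only [coeff_iterate_derivative_add_pow_char, map_zero]
  constructor
  · intro h n
    simpa [hp.out.pos, hshift, sub_eq_zero] using h (p * n)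
  · rintro h m
    split_ifs with hm
    · obtain ⟨n, rfl⟩ := hm
      rw [Nat.mul_div_cancel_left _ hp.out.pos, hshift, h, sub_self]
    · rfl

/-- Let `p` be a prime and `b(x) ∈ 𝔽_p(x)` a rational function admitting a power series
expansion `b = ∑_{n≥0} u_n xⁿ`.  The operator `∂ − b(x)` has vanishing `p`-curvature
`b^{(p−1)} + b^p = 0` if and only if `u_n ≡ u_{(n+1)p−1} (mod p)` for all `n ≥ 0`. -/
theorem pCurvature_zero_iff_coeff_congruences
    (p : ℕ) [Fact p.Prime] (b : RatFunc (ZMod p)) (u : ℕ → ZMod p)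
    (hu : (b : LaurentSeries (ZMod p)) =
      HahnSeries.ofPowerSeries ℤ (ZMod p) (PowerSeries.mk u)) :
    rderiv^[p - 1] b + b ^ p = 0 ↔ ∀ n : ℕ, u n = u ((n + 1) * p - 1) := by
  rw [rderiv_iterate_add_pow_eq_zero_iff (p - 1) p hu,
    iterate_derivative_add_pow_char_eq_zero_iff]
  simp only [coeff_mk]
end
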